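/- arXiv:1404.7219 — 7 statements merged into one kernel-verified Lean document; each statement's English description precedes it below -/
import Mathlib

section
/- Let R_n be the strong product of three paths on n vertices, i.e., the graph with vertex set {(i,j,k) : 1 ≤ i,j,k ≤ n} in which two distinct vertices (i₁,j₁,k₁) and (i₂,j₂,k₂) are adjacent iff |i₁−i₂| ≤ 1, |j₁−j₂| ≤ 1 and |k₁−k₂| ≤ 1, and let ℛ = {R_n : n ≥ 1}. Then the class ℛ is fractionally Vs-fragile: for every ε > 0, setting u = ⌈3/ε⌉, the class of graphs in which every connected component has at most (u−1)³ vertices is an ε-witness of the fractional Vs-fragility of ℛ. -/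
open Classical Filter

attribute [local instance] Classical.propDecidable

noncomputable section

/-- A finite graph, bundled with its (finite) vertex type. -/
structure FGraph : Type 1 where
  V : Type
  [fin : Fintype V]
  G : SimpleGraph V

attribute [instance] FGraph.fin

namespace FGraph

/-- The number of vertices. -/
def card (G : FGraph) : ℕ := Fintype.card G.V

/-- The number of edges. -/
def edgeCount (G : FGraph) : ℕ := G.G.edgeSet.ncard

/-- The edge density `|E(G)|/|V(G)|`. -/
def density (G : FGraph) : ℝ := (G.edgeCount : ℝ) / (G.card : ℝ)

/-- `G − X`: the subgraph induced by the complement of `X`. -/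
def del (G : FGraph) (X : Set G.V) : FGraph := ⟨↥(Xᶜ), G.G.induce (Xᶜ : Set G.V)⟩

/-- `H` is (isomorphic to) a subgraph of `G`. -/
def IsSubgraphOf (H G : FGraph) : Prop :=
  ∃ f : H.V → G.V, Function.Injective f ∧ ∀ a b, H.G.Adj a b → G.G.Adj (f a) (f b)

/-- The class `C` is closed under taking subgraphs. -/
def SubgraphClosed (C : Set FGraph) : Prop :=
  ∀ G ∈ C, ∀ H : FGraph, IsSubgraphOf H G → H ∈ C

/-- `G` has maximum degree at most `d`. -/
def maxDegLE (G : FGraph) (d : ℕ) : Prop := ∀ v : G.V, (G.G.neighborSet v).ncard ≤ d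

/-- The maximum degree of `G`. -/
def maxDeg (G : FGraph) : ℕ := Finset.univ.sup fun v : G.V => (G.G.neighborSet v).ncard

/-- The class `C` has bounded maximum degree. -/
def BddMaxDeg (C : Set FGraph) : Prop := ∃ Δ : ℕ, ∀ G ∈ C, G.maxDegLE Δ

/-- `H` is a `d`-minor of `G`: obtained by contracting pairwise disjoint subgraphs of
radius at most `d` (the branch sets `B w`) and deleting vertices and edges. -/
def IsMinor (d : ℕ) (H G : FGraph) : Prop :=
  ∃ B : H.V → Set G.V,
    (∀ w, (B w).Nonempty) ∧
    (Pairwise fun w w' => Disjoint (B w) (B w')) ∧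
    (∀ w : H.V, ∃ v ∈ B w, ∀ u ∈ B w, ∃ p : G.G.Walk v u,
      p.length ≤ d ∧ ∀ x ∈ p.support, x ∈ B w) ∧
    (∀ w w' : H.V, H.G.Adj w w' → ∃ v ∈ B w, ∃ v' ∈ B w', G.G.Adj v v')

/-- The complete graph `K_t` as a bundled finite graph. -/
def completeFG (t : ℕ) : FGraph := ⟨Fin t, ⊤⟩

/-- The set of densities of `k`-minors of graphs in the class `C`. -/
def densSet (k : ℕ) (C : Set FGraph) : Set ℝ :=
  {r | ∃ G ∈ C, ∃ H : FGraph, IsMinor k H G ∧ r = H.density}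

/-- `∇_k(C)`: the supremum of densities of `k`-minors of graphs in `C`. -/
def nablaClass (k : ℕ) (C : Set FGraph) : ℝ := sSup (densSet k C)

/-- `G` has a balanced separation of size at most `s`. -/
def SepAtMost (G : FGraph) (s : ℕ) : Prop :=
  ∃ A B : G.G.Subgraph, A ⊔ B = ⊤ ∧ Disjoint A.edgeSet B.edgeSet ∧
    3 * (A.verts \ B.verts).ncard ≤ 2 * G.card ∧
    3 * (B.verts \ A.verts).ncard ≤ 2 * G.card ∧
    (A.verts ∩ B.verts).ncard ≤ s

/-- `s_C(n)`: the smallest `s` such that every graph in `C` with at most `n` vertices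
has a balanced separation of size at most `s`. -/
def sepf (C : Set FGraph) (n : ℕ) : ℕ :=
  sInf {s | ∀ G ∈ C, G.card ≤ n → SepAtMost G s}

/-- The class `C` has sublinear separators. -/
def SublinearSep (C : Set FGraph) : Prop :=
  Tendsto (fun n : ℕ => (sepf C n : ℝ) / (n : ℝ)) atTop (nhds 0)

/-- The class `C` has strongly sublinear separators. -/
def StronglySublinearSep (C : Set FGraph) : Prop :=
  ∃ c δ : ℝ, 1 ≤ c ∧ 0 ≤ δ ∧ δ < 1 ∧ ∀ n : ℕ, (sepf C n : ℝ) ≤ c * (n : ℝ) ^ δ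

/-- The number of vertices of the connected component of `v`. -/
def compSize (G : FGraph) (v : G.V) : ℕ := ((G.G.connectedComponentMk v).supp).ncard

/-- `G` has a fractional `C`-complementary packing of thickness at most `ε`. -/
def FracPack (G : FGraph) (C : Set FGraph) (ε : ℝ) : Prop :=
  ∃ π : Finset G.V → ℝ,
    (∀ X, 0 ≤ π X) ∧
    (∑ X : Finset G.V, π X = 1) ∧
    (∀ X : Finset G.V, π X ≠ 0 → G.del (↑X : Set G.V) ∈ C) ∧
    (∀ v : G.V, ∑ X ∈ Finset.univ.filter (fun X : Finset G.V => v ∈ X), π X ≤ ε)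

/-- `C` is an `ε`-witness for the class `Gc`: every graph in `Gc` has a fractional
`C`-complementary packing of thickness at most `ε`. -/
def Witness (C Gc : Set FGraph) (ε : ℝ) : Prop := ∀ G ∈ Gc, FracPack G C ε

/-- `Gc` is fractionally `P`-fragile. -/
def FracFragile (P : Set (Set FGraph)) (Gc : Set FGraph) : Prop :=
  ∀ ε : ℝ, 0 < ε → ∃ C ∈ P, Witness C Gc ε

/-- The class property `Vs` of all graph classes with bounded component size. -/
def Vs : Set (Set FGraph) := {C | ∃ t : ℕ, ∀ G ∈ C, ∀ v : G.V, G.compSize v ≤ t}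

/-- `(T, β)` is a tree decomposition of `G`. -/
def IsTreeDecomp (G : FGraph) {ι : Type} (T : SimpleGraph ι) (β : ι → Set G.V) : Prop :=
  T.IsTree ∧
  (∀ v : G.V, ∃ u, v ∈ β u) ∧
  (∀ v w : G.V, G.G.Adj v w → ∃ u, v ∈ β u ∧ w ∈ β u) ∧
  (∀ v : G.V, (T.induce {u | v ∈ β u}).Connected)

/-- `G` has treewidth at most `k`. -/
def twLE (G : FGraph) (k : ℕ) : Prop :=
  ∃ (ι : Type) (_ : Fintype ι) (T : SimpleGraph ι) (β : ι → Set G.V),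
    IsTreeDecomp G T β ∧ ∀ u, (β u).ncard ≤ k + 1

/-- The treewidth of `G`. -/
def treewidth (G : FGraph) : ℕ := sInf {k | twLE G k}

/-- The class property `Tw` of all graph classes with bounded treewidth. -/
def Tw : Set (Set FGraph) := {C | ∃ k : ℕ, ∀ G ∈ C, twLE G k}

end FGraph

/-- `R_n`: the strong product of three paths on `n` vertices. -/
def Rgraph (n : ℕ) : FGraph :=
  ⟨Fin n × Fin n × Fin n,
    SimpleGraph.fromRel fun a b =>
      |(a.1 : ℤ) - (b.1 : ℤ)| ≤ 1 ∧ |(a.2.1 : ℤ) - (b.2.1 : ℤ)| ≤ 1 ∧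
        |(a.2.2 : ℤ) - (b.2.2 : ℤ)| ≤ 1⟩

/-- The class `ℛ = {R_n : n ≥ 1}`. -/
def Rclass : Set FGraph := {R | ∃ n : ℕ, 1 ≤ n ∧ R = Rgraph n}

/-!
Fix `u ≥ 1`, choose a shift `t ∈ [u]³` uniformly at random, and delete every vertex `v` of `R_n`
with `u ∣ vₖ + tₖ` for some coordinate `k`. What is left splits into boxes of side `u - 1`, and
no edge of `R_n` joins two boxes, because an edge changes each coordinate by at most one and so
cannot jump over a deleted layer; hence every component has at most `(u - 1)³` vertices.
A fixed vertex is deleted for at most `3u²` of the `u³` shifts, i.e. with probability at most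
`3/u ≤ ε`.
-/

open Finset

theorem SimpleGraph.Reachable.apply_eq {V β : Type*} {G : SimpleGraph V} (f : V → β)
    (hf : ∀ x y, G.Adj x y → f x = f y) {x y : V} (h : G.Reachable x y) : f x = f y := by
  have := Relation.ReflTransGen.lift (p := Eq) f hf x y
    ((SimpleGraph.reachable_iff_reflTransGen x y).1 h)
  rwa [Function.onFun, Relation.reflTransGen_eq_self] at this

namespace FGraph

theorem fracPack_of_uniform (G : FGraph) (C : Set FGraph) (ε : ℝ) {ι : Type*} [Fintype ι]
    [Nonempty ι] (X : ι → Finset G.V) (hC : ∀ i, G.del ↑(X i) ∈ C)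
    (hthick : ∀ v, (#{i | v ∈ X i} : ℝ) ≤ ε * Fintype.card ι) :
    G.FracPack C ε := by
  have hι : (0 : ℝ) < Fintype.card ι := by exact_mod_cast Fintype.card_pos
  have fiberwise (s : Finset (Finset G.V)) :
      ∑ Y ∈ s, (#{i | X i = Y} : ℝ) = #{i | X i ∈ s} := by
    rw [card_eq_sum_card_fiberwise (s := {i | X i ∈ s}) (t := s) fun i hi => (mem_filter.1 hi).2]
    push_cast
    refine sum_congr rfl fun Y hY => ?_
    rw [filter_filter, filter_congr fun i _ => and_iff_right_of_imp fun h => h ▸ hY]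
  refine ⟨fun Y => #{i | X i = Y} / Fintype.card ι, fun Y => by positivity, ?_, ?_, ?_⟩
  · rw [← sum_div, fiberwise, div_eq_one_iff_eq hι.ne']
    simp
  · intro Y hY
    obtain ⟨i, hi⟩ : ({i | X i = Y} : Finset ι).Nonempty :=
      card_ne_zero.1 fun h => hY (by simp [h])
    exact (mem_filter.1 hi).2 ▸ hC i
  · intro v
    rw [← sum_div, fiberwise, div_le_iff₀ hι]
    simpa using hthick v

theorem compSize_le_card_of_injOn_fibers (G : FGraph) {β γ : Type*} (F : G.V → β) (g : G.V → γ)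
    (S : Finset γ) (hF : ∀ x y, G.G.Adj x y → F x = F y)
    (hg : ∀ x y, F x = F y → g x = g y → x = y) (hS : ∀ x, g x ∈ S) (v : G.V) :
    G.compSize v ≤ #S := by
  have hsupp {w} (hw : w ∈ (G.G.connectedComponentMk v).supp) : F w = F v :=
    (SimpleGraph.ConnectedComponent.eq.1 hw).apply_eq F hF
  rw [compSize, ← Set.ncard_coe_finset]
  exact Set.ncard_le_ncard_of_injOn g (fun x _ => hS x)
    (fun x hx y hy hxy => hg x y ((hsupp hx).trans (hsupp hy).symm) hxy) S.finite_toSet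

end FGraph

theorem Nat.div_eq_div_of_abs_sub_le_one {u s x y : ℕ} (hxy : |(x : ℤ) - y| ≤ 1)
    (hx : ¬ u ∣ x + s) (hy : ¬ u ∣ y + s) : (x + s) / u = (y + s) / u := by
  rcases (by rw [abs_le] at hxy; omega : x = y ∨ x = y + 1 ∨ y = x + 1) with rfl | rfl | rfl
  · rfl
  · rw [Nat.add_right_comm] at hx ⊢
    exact Nat.succ_div_of_not_dvd hx
  · rw [Nat.add_right_comm] at hy ⊢
    exact (Nat.succ_div_of_not_dvd hy).symm

theorem Fin.card_filter_dvd_add_le_one (u c : ℕ) : #{s : Fin u | u ∣ c + s} ≤ 1 := by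
  refine card_le_one.2 fun s hs s' hs' => Fin.ext ?_
  have hcs : c + s ≡ c + s' [MOD u] := (Nat.modEq_zero_iff_dvd.2 (mem_filter.1 hs).2).trans
    (Nat.modEq_zero_iff_dvd.2 (mem_filter.1 hs').2).symm
  exact (Nat.ModEq.add_left_cancel' c hcs).eq_of_lt_of_lt s.isLt s'.isLt

theorem Rgraph.abs_sub_le_one_of_adj {n : ℕ} {a b : (Rgraph n).V} (h : (Rgraph n).G.Adj a b) :
    |(a.1 : ℤ) - b.1| ≤ 1 ∧ |(a.2.1 : ℤ) - b.2.1| ≤ 1 ∧ |(a.2.2 : ℤ) - b.2.2| ≤ 1 := by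
  rcases ((SimpleGraph.fromRel_adj _ _ _).1 h).2 with h | h
  · exact h
  · simpa only [abs_sub_comm] using h

def gridCut (n u : ℕ) (t : Fin u × Fin u × Fin u) : Finset (Rgraph n).V :=
  {v | u ∣ v.1 + t.1 ∨ u ∣ v.2.1 + t.2.1 ∨ u ∣ v.2.2 + t.2.2}

theorem compSize_del_gridCut_le (n u : ℕ) (t : Fin u × Fin u × Fin u)
    (v : ((Rgraph n).del ↑(gridCut n u t)).V) :
    ((Rgraph n).del ↑(gridCut n u t)).compSize v ≤ (u - 1) ^ 3 := by
  have hcut (w : ((Rgraph n).del ↑(gridCut n u t)).V) :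
      ¬ u ∣ w.1.1 + t.1 ∧ ¬ u ∣ w.1.2.1 + t.2.1 ∧ ¬ u ∣ w.1.2.2 + t.2.2 := by
    simpa [gridCut, not_or] using w.2
  have hcoord {a b : Fin n} {s : ℕ} (hdiv : (a + s) / u = (b + s) / u)
      (hmod : (a + s) % u = (b + s) % u) : a = b :=
    Fin.ext (Nat.add_right_cancel (Nat.ext_div_mod hdiv hmod))
  have hres {x : ℕ} (hx : ¬ u ∣ x) : x % u ∈ Ioo 0 u :=
    mem_Ioo.2 ⟨Nat.pos_of_ne_zero fun h => hx (Nat.dvd_of_mod_eq_zero h), Nat.mod_lt x t.1.pos⟩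
  convert (Rgraph n).del ↑(gridCut n u t) |>.compSize_le_card_of_injOn_fibers
    (fun w => ((w.1.1 + t.1 : ℕ) / u, (w.1.2.1 + t.2.1 : ℕ) / u, (w.1.2.2 + t.2.2 : ℕ) / u))
    (fun w => ((w.1.1 + t.1 : ℕ) % u, (w.1.2.1 + t.2.1 : ℕ) % u, (w.1.2.2 + t.2.2 : ℕ) % u))
    (Ioo 0 u ×ˢ Ioo 0 u ×ˢ Ioo 0 u) ?_ ?_ ?_ v
  · simp only [card_product, Nat.card_Ioo, tsub_zero]; ring
  · intro x y hxy
    obtain ⟨h₁, h₂, h₃⟩ := Rgraph.abs_sub_le_one_of_adj hxy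
    obtain ⟨hx₁, hx₂, hx₃⟩ := hcut x
    obtain ⟨hy₁, hy₂, hy₃⟩ := hcut y
    simp only [Prod.mk.injEq]
    exact ⟨Nat.div_eq_div_of_abs_sub_le_one h₁ hx₁ hy₁,
      Nat.div_eq_div_of_abs_sub_le_one h₂ hx₂ hy₂, Nat.div_eq_div_of_abs_sub_le_one h₃ hx₃ hy₃⟩
  · intro x y hdiv hmod
    simp only [Prod.mk.injEq] at hdiv hmod
    exact Subtype.ext (Prod.ext (hcoord hdiv.1 hmod.1)
      (Prod.ext (hcoord hdiv.2.1 hmod.2.1) (hcoord hdiv.2.2 hmod.2.2)))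
  · intro w
    obtain ⟨h₁, h₂, h₃⟩ := hcut w
    exact mem_product.2 ⟨hres h₁, mem_product.2 ⟨hres h₂, hres h₃⟩⟩

theorem card_filter_mem_gridCut_le (n u : ℕ) (v : (Rgraph n).V) :
    #{t | v ∈ gridCut n u t} ≤ 3 * u ^ 2 := by
  set B₁ : Finset (Fin u) := {s | u ∣ v.1 + s}
  set B₂ : Finset (Fin u) := {s | u ∣ v.2.1 + s}
  set B₃ : Finset (Fin u) := {s | u ∣ v.2.2 + s}
  calc #{t | v ∈ gridCut n u t}
      ≤ #(B₁ ×ˢ univ ×ˢ univ ∪ univ ×ˢ B₂ ×ˢ univ ∪ univ ×ˢ univ ×ˢ B₃) := by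
        refine card_le_card fun t ht => ?_
        simpa [B₁, B₂, B₃, gridCut] using ht
    _ ≤ #B₁ * (u * u) + u * (#B₂ * u) + u * (u * #B₃) := by
        refine (card_union_le _ _).trans (add_le_add (card_union_le _ _) le_rfl) |>.trans ?_
        simp [card_product]
    _ ≤ 1 * (u * u) + u * (1 * u) + u * (u * 1) := by
        gcongr <;> exact Fin.card_filter_dvd_add_le_one _ _
    _ = 3 * u ^ 2 := by ring

/-- **Lemma 9.** The class `ℛ` is fractionally `Vs`-fragile; moreover for every `ε > 0`,
with `u = ⌈3/ε⌉`, the class of graphs whose components have at most `(u-1)³` vertices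
is an `ε`-witness of the fractional `Vs`-fragility of `ℛ`. -/
theorem stmt4 :
    FGraph.FracFragile FGraph.Vs Rclass ∧
    ∀ ε : ℝ, 0 < ε →
      ({G : FGraph | ∀ v : G.V, G.compSize v ≤ (⌈3 / ε⌉₊ - 1) ^ 3} ∈ FGraph.Vs ∧
        FGraph.Witness {G : FGraph | ∀ v : G.V, G.compSize v ≤ (⌈3 / ε⌉₊ - 1) ^ 3}
          Rclass ε) := by
  have bounded (ε : ℝ) :
      {G : FGraph | ∀ v : G.V, G.compSize v ≤ (⌈3 / ε⌉₊ - 1) ^ 3} ∈ FGraph.Vs :=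
    ⟨_, fun _ hG => hG⟩
  have witness (ε : ℝ) (hε : 0 < ε) :
      FGraph.Witness {G : FGraph | ∀ v : G.V, G.compSize v ≤ (⌈3 / ε⌉₊ - 1) ^ 3} Rclass ε := by
    rintro _ ⟨n, -, rfl⟩
    set u := ⌈3 / ε⌉₊
    have hu : 3 ≤ ε * u := (div_le_iff₀' hε).1 (Nat.le_ceil _)
    have : Nonempty (Fin u) := Fin.pos_iff_nonempty.1 (Nat.ceil_pos.2 (by positivity))
    refine (Rgraph n).fracPack_of_uniform _ ε (gridCut n u) (compSize_del_gridCut_le n u)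
      fun v => ?_
    calc (#{t | v ∈ gridCut n u t} : ℝ)
        ≤ 3 * u ^ 2 := by exact_mod_cast card_filter_mem_gridCut_le n u v
      _ ≤ ε * u * u ^ 2 := by gcongr
      _ = ε * Fintype.card (Fin u × Fin u × Fin u) := by
        simp only [Fintype.card_prod, Fintype.card_fin, Nat.cast_mul]; ring
  exact ⟨fun ε hε => ⟨_, bounded ε, witness ε hε⟩, fun ε hε => ⟨bounded ε, witness ε hε⟩⟩
end
end

section
/- Let g : ℝ⁺ × ℕ → ℕ be an arbitrary function and define f : ℕ → ℕ by f(k) = 2·g(1/(4k+4), k). If 𝒢 is a fractionally (Be,g)-fragile class of graphs, then ∇_k(𝒢) ≤ f(k) for every integer k ≥ 0. -/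
open Classical Filter

attribute [local instance] Classical.propDecidable

noncomputable section

/-- `Ex(f)`: the class of graphs `G` with `∇_k(G) ≤ f(k)` for all `k`. -/
def ExCl (f : ℕ → ℕ) : Set FGraph :=
  {G | ∀ k : ℕ, ∀ H : FGraph, FGraph.IsMinor k H G → H.density ≤ (f k : ℝ)}

/-!
Let `H` be a `k`-minor of `G ∈ 𝒢`, with branch sets `B w` of radius `k` around centres `c w`.
Each edge `ww'` of `H` has a *blocker*: the at most `2k + 2` vertices of two radius-`k` walks
from `c w` and `c w'` ending in a `G`-edge between `B w` and `B w'`. Take a packing `π` of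
thickness `ε = 1/(4k+4)`. For `X` in its support, the edges whose blocker avoids `X` survive
in a `k`-minor of `G − X ∈ Ex(g(ε, ·))`, obtained by shrinking each `B w` to the ball of
radius `k` around `c w` in `G[B w − X]`; so at most `g(ε, k)·|V(H)|` edges survive. By the
union bound an edge dies with `π`-probability at most `(2k + 2)ε = 1/2`, hence
`|E(H)|/2 ≤ g(ε, k)·|V(H)|`.
-/

open Finset

namespace SimpleGraph

variable {V W : Type*}

def inducedBall (G : SimpleGraph V) (S : Set V) (a : V) (k : ℕ) : Set V :=
  {u | ∃ p : G.Walk a u, p.length ≤ k ∧ ∀ x ∈ p.support, x ∈ S}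

def HasEdgeBetween (G : SimpleGraph V) (S S' : Set V) : Prop :=
  ∃ v ∈ S, ∃ v' ∈ S', G.Adj v v'

variable {G : SimpleGraph V} {S S' : Set V} {a b u : V} {k : ℕ}

lemma HasEdgeBetween.symm (h : G.HasEdgeBetween S S') : G.HasEdgeBetween S' S := by
  obtain ⟨v, hv, v', hv', hadj⟩ := h
  exact ⟨v', hv', v, hv, hadj.symm⟩

lemma inducedBall_subset : G.inducedBall S a k ⊆ S :=
  fun _ ⟨p, _, hp⟩ => hp _ p.end_mem_support

lemma mem_of_mem_inducedBall (hu : u ∈ G.inducedBall S a k) : a ∈ S := by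
  obtain ⟨p, _, hp⟩ := hu
  exact hp _ p.start_mem_support

lemma self_mem_inducedBall (ha : a ∈ S) : a ∈ G.inducedBall S a k :=
  ⟨.nil, Nat.zero_le _, by simpa using ha⟩

lemma inducedBall_subset_inducedBall_inducedBall :
    G.inducedBall S a k ⊆ G.inducedBall (G.inducedBall S a k) a k := by
  rintro u ⟨p, hlen, hp⟩
  refine ⟨p, hlen, fun x hx => ⟨p.takeUntil x hx, ?_, fun y hy => hp y ?_⟩⟩
  · exact (p.length_takeUntil_le_length hx).trans hlen
  · exact p.support_takeUntil_subset_support hx hy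

lemma mem_inducedBall_induce {s : Set V} (hS : S ⊆ s) {a u : s}
    (hu : (u : V) ∈ G.inducedBall S a k) :
    u ∈ (G.induce s).inducedBall (Subtype.val ⁻¹' S) a k := by
  obtain ⟨p, hlen, hp⟩ := hu
  have hps : ∀ x ∈ p.support, x ∈ s := fun x hx => hS (hp x hx)
  refine ⟨p.induce s hps, ?_, fun x hx => ?_⟩
  · rw [← Walk.length_map (Embedding.induce s).toHom, Walk.map_induce]
    exact hlen
  · simp only [Walk.support_induce, List.mem_attachWith] at hx
    exact hp x hx

lemma exists_finset_forall_disjoint_mem_inducedBall (hu : u ∈ G.inducedBall S a k) :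
    ∃ T : Finset V, #T ≤ k + 1 ∧
      ∀ X : Finset V, Disjoint T X → u ∈ G.inducedBall (S \ X) a k := by
  obtain ⟨p, hlen, hp⟩ := hu
  refine ⟨p.support.toFinset, ?_, fun X hX => ⟨p, hlen, fun x hx => ⟨hp x hx, ?_⟩⟩⟩
  · calc #p.support.toFinset ≤ p.support.length := List.toFinset_card_le _
      _ ≤ k + 1 := by rw [p.length_support]; omega
  · exact Finset.disjoint_left.1 hX (List.mem_toFinset.2 hx)

lemma HasEdgeBetween.exists_finset_forall_disjoint (hS : S ⊆ G.inducedBall S a k)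
    (hS' : S' ⊆ G.inducedBall S' b k) (h : G.HasEdgeBetween S S') :
    ∃ T : Finset V, #T ≤ 2 * k + 2 ∧ ∀ X : Finset V, Disjoint T X →
      G.HasEdgeBetween (G.inducedBall (S \ X) a k) (G.inducedBall (S' \ X) b k) := by
  obtain ⟨v, hv, v', hv', hadj⟩ := h
  obtain ⟨T, hT, hTX⟩ := exists_finset_forall_disjoint_mem_inducedBall (hS hv)
  obtain ⟨T', hT', hT'X⟩ := exists_finset_forall_disjoint_mem_inducedBall (hS' hv')
  refine ⟨T ∪ T', by grw [card_union_le]; omega, fun X hX => ?_⟩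
  rw [disjoint_union_left] at hX
  exact ⟨v, hTX X hX.1, v', hT'X X hX.2, hadj⟩

lemma exists_edge_blockers {H : SimpleGraph W} {B : W → Set V} {c : W → V}
    (hc : ∀ w, B w ⊆ G.inducedBall (B w) (c w) k)
    (hadj : ∀ w w', H.Adj w w' → G.HasEdgeBetween (B w) (B w')) :
    ∃ T : Sym2 W → Finset V, (∀ e, #(T e) ≤ 2 * k + 2) ∧
      ∀ w w', H.Adj w w' → ∀ X : Finset V, Disjoint (T s(w, w')) X →
        G.HasEdgeBetween (G.inducedBall (B w \ X) (c w) k)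
          (G.inducedBall (B w' \ X) (c w') k) := by
  suffices h : ∀ e : Sym2 W, ∃ T : Finset V, #T ≤ 2 * k + 2 ∧
      ∀ w w', s(w, w') = e → H.Adj w w' → ∀ X : Finset V, Disjoint T X →
        G.HasEdgeBetween (G.inducedBall (B w \ X) (c w) k)
          (G.inducedBall (B w' \ X) (c w') k) by
    choose T hcard hT using h
    exact ⟨T, hcard, fun w w' hww' => hT _ w w' rfl hww'⟩
  refine Sym2.ind fun w₀ w₀' => ?_
  by_cases h₀ : H.Adj w₀ w₀'
  · obtain ⟨T, hcard, hT⟩ := (hadj w₀ w₀' h₀).exists_finset_forall_disjoint (hc w₀) (hc w₀')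
    refine ⟨T, hcard, fun w w' he _ X hX => ?_⟩
    rcases Sym2.eq_iff.1 he with ⟨rfl, rfl⟩ | ⟨rfl, rfl⟩
    · exact hT X hX
    · exact (hT X hX).symm
  · refine ⟨∅, by simp, fun w w' he hww' => absurd ?_ h₀⟩
    rw [← mem_edgeSet, ← he]
    exact hww'

end SimpleGraph

section Averaging

variable {ι α V : Type*} [Fintype ι] [Fintype V]

lemma sum_filter_not_disjoint_le {π : Finset V → ℝ} (hπ : ∀ X, 0 ≤ π X) {ε : ℝ}
    (hthick : ∀ v, ∑ X ∈ univ.filter (fun X => v ∈ X), π X ≤ ε) (T : Finset V) :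
    ∑ X ∈ univ.filter (fun X => ¬ Disjoint T X), π X ≤ #T * ε := by
  calc ∑ X ∈ univ.filter (fun X => ¬ Disjoint T X), π X
      ≤ ∑ X, ∑ x ∈ T, if x ∈ X then π X else 0 := by
        rw [sum_filter]
        refine sum_le_sum fun X _ => ?_
        have hterm : ∀ x ∈ T, 0 ≤ if x ∈ X then π X else 0 := fun x _ => by
          split_ifs <;> simp [hπ]
        split_ifs with h
        · exact sum_nonneg hterm
        · obtain ⟨x, hxT, hxX⟩ := not_disjoint_iff.1 h
          calc π X = if x ∈ X then π X else 0 := (if_pos hxX).symm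
            _ ≤ _ := single_le_sum hterm hxT
    _ = ∑ x ∈ T, ∑ X ∈ univ.filter (fun X => x ∈ X), π X := by
        rw [sum_comm]
        simp only [sum_filter]
    _ ≤ ∑ x ∈ T, ε := sum_le_sum fun x _ => hthick x
    _ = #T * ε := by rw [sum_const, nsmul_eq_mul]

lemma one_sub_mul_card_le {π : ι → ℝ} (hπ0 : ∀ i, 0 ≤ π i) (hπ1 : ∑ i, π i = 1)
    {E : Finset α} {P : α → ι → Prop} [∀ e, DecidablePred (P e)] [∀ i, DecidablePred (P · i)]
    {A p : ℝ}
    (hsurv : ∀ i, π i ≠ 0 → (#{e ∈ E | P e i} : ℝ) ≤ A)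
    (hkill : ∀ e ∈ E, ∑ i ∈ univ.filter (fun i => ¬ P e i), π i ≤ p) :
    (1 - p) * #E ≤ A := by
  calc (1 - p) * #E = ∑ e ∈ E, (1 - p) := by rw [sum_const, nsmul_eq_mul, mul_comm]
    _ ≤ ∑ e ∈ E, ∑ i ∈ univ.filter (fun i => P e i), π i := sum_le_sum fun e he => by
        have := sum_filter_add_sum_filter_not univ (P e) π
        linarith [hkill e he]
    _ = ∑ i, π i * #{e ∈ E | P e i} := by
        simp only [sum_filter, card_filter, Nat.cast_sum, mul_sum]
        rw [sum_comm]
        simp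
    _ ≤ ∑ i, π i * A := sum_le_sum fun i _ => by
        by_cases h : π i = 0
        · simp [h]
        · exact mul_le_mul_of_nonneg_left (hsurv i h) (hπ0 i)
    _ = A := by rw [← sum_mul, hπ1, one_mul]

end Averaging

namespace FGraph

open SimpleGraph

lemma edgeCount_eq_card_edgeFinset (G : FGraph) : G.edgeCount = #G.G.edgeFinset := by
  rw [edgeCount, ← coe_edgeFinset, Set.ncard_coe_finset]

lemma density_le_iff {G : FGraph} {r : ℝ} (hr : 0 ≤ r) :
    G.density ≤ r ↔ (G.edgeCount : ℝ) ≤ r * G.card := by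
  rcases Nat.eq_zero_or_pos G.card with h0 | hpos
  · have hE : G.edgeCount = 0 := by
      have := G.G.card_edgeFinset_le_card_choose_two
      rw [← edgeCount_eq_card_edgeFinset, ← card, h0] at this
      simpa using this
    simp [density, hE, h0, hr]
  · exact div_le_iff₀ (by exact_mod_cast hpos)

def IsMinorModel (d : ℕ) (H G : FGraph) (B : H.V → Set G.V) : Prop :=
  (∀ w, (B w).Nonempty) ∧ (Pairwise fun w w' => Disjoint (B w) (B w')) ∧
    (∀ w, ∃ v ∈ B w, B w ⊆ G.G.inducedBall (B w) v d) ∧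
    ∀ w w', H.G.Adj w w' → G.G.HasEdgeBetween (B w) (B w')

lemma isMinor_iff {d : ℕ} {H G : FGraph} : IsMinor d H G ↔ ∃ B, IsMinorModel d H G B :=
  Iff.rfl

lemma IsMinorModel.del {d : ℕ} {H G : FGraph} {B : H.V → Set G.V} (hB : IsMinorModel d H G B)
    {X : Set G.V} (hX : ∀ w, Disjoint (B w) X) :
    IsMinorModel d H (G.del X) fun w => Subtype.val ⁻¹' B w := by
  obtain ⟨hne, hdisj, hrad, hadj⟩ := hB
  have hBX : ∀ w, B w ⊆ Xᶜ := fun w => (hX w).subset_compl_right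
  refine ⟨fun w => ?_, fun w w' h => (hdisj h).preimage _, fun w => ?_, fun w w' h => ?_⟩
  · obtain ⟨v, hv⟩ := hne w
    exact ⟨⟨v, hBX w hv⟩, hv⟩
  · obtain ⟨v, hv, hball⟩ := hrad w
    exact ⟨⟨v, hBX w hv⟩, hv, fun u hu => mem_inducedBall_induce (hBX w) (hball hu)⟩
  · obtain ⟨v, hv, v', hv', hvv'⟩ := hadj w w' h
    exact ⟨⟨v, hBX w hv⟩, hv, ⟨v', hBX w' hv'⟩, hv', hvv'⟩

def prunedMinor (G H : FGraph) (B : H.V → Set G.V) (c : H.V → G.V) (k : ℕ) : FGraph where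
  V := {w : H.V // c w ∈ B w}
  G :=
    { Adj := fun w w' => H.G.Adj w w' ∧
        G.G.HasEdgeBetween (G.G.inducedBall (B w) (c w) k) (G.G.inducedBall (B w') (c w') k)
      symm := ⟨fun _ _ h => ⟨h.1.symm, h.2.symm⟩⟩
      loopless := ⟨fun _ h => h.1.ne rfl⟩ }

variable {G H : FGraph} {B : H.V → Set G.V} {c : H.V → G.V} {k : ℕ}

lemma isMinorModel_prunedMinor (hB : Pairwise fun w w' => Disjoint (B w) (B w')) :
    IsMinorModel k (prunedMinor G H B c k) G fun w => G.G.inducedBall (B w.1) (c w.1) k := by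
  refine ⟨fun w => ⟨_, self_mem_inducedBall w.2⟩, fun w w' h => ?_,
    fun w => ⟨c w.1, self_mem_inducedBall w.2, inducedBall_subset_inducedBall_inducedBall⟩,
    fun w w' h => h.2⟩
  exact (hB (Subtype.val_injective.ne h)).mono inducedBall_subset inducedBall_subset

lemma card_filter_le_edgeCount_prunedMinor {Q : Sym2 H.V → Prop} [DecidablePred Q]
    (hQ : ∀ w w', H.G.Adj w w' → Q s(w, w') →
      G.G.HasEdgeBetween (G.G.inducedBall (B w) (c w) k) (G.G.inducedBall (B w') (c w') k)) :
    #{e ∈ H.G.edgeFinset | Q e} ≤ (prunedMinor G H B c k).edgeCount := by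
  have hsub : (↑{e ∈ H.G.edgeFinset | Q e} : Set (Sym2 H.V)) ⊆
      Sym2.map Subtype.val '' (prunedMinor G H B c k).G.edgeSet := by
    intro e he
    induction e using Sym2.ind with
    | _ w w' =>
      simp only [coe_filter, mem_edgeFinset, mem_edgeSet, Set.mem_ofPred_eq] at he
      obtain ⟨v, hv, v', hv', hvv'⟩ := hQ w w' he.1 he.2
      exact ⟨s(⟨w, mem_of_mem_inducedBall hv⟩, ⟨w', mem_of_mem_inducedBall hv'⟩),
        ⟨he.1, v, hv, v', hv', hvv'⟩, rfl⟩
  calc #{e ∈ H.G.edgeFinset | Q e}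
      = (↑{e ∈ H.G.edgeFinset | Q e} : Set (Sym2 H.V)).ncard := (Set.ncard_coe_finset _).symm
    _ ≤ (Sym2.map Subtype.val '' (prunedMinor G H B c k).G.edgeSet).ncard :=
        Set.ncard_le_ncard hsub (Set.toFinite _)
    _ = (prunedMinor G H B c k).edgeCount :=
        Set.ncard_image_of_injective _ (Sym2.map.injective Subtype.val_injective)

lemma card_filter_le_of_del_mem_exCl {f : ℕ → ℕ}
    (hB : Pairwise fun w w' => Disjoint (B w) (B w'))
    {X : Finset G.V} {Q : Sym2 H.V → Prop} [DecidablePred Q]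
    (hQ : ∀ w w', H.G.Adj w w' → Q s(w, w') →
      G.G.HasEdgeBetween (G.G.inducedBall (B w \ X) (c w) k)
        (G.G.inducedBall (B w' \ X) (c w') k))
    (hX : G.del X ∈ ExCl f) :
    (#{e ∈ H.G.edgeFinset | Q e} : ℝ) ≤ f k * H.card := by
  set K := prunedMinor G H (fun w => B w \ X) c k
  have hK : IsMinor k K (G.del X) := isMinor_iff.2 ⟨_,
    (isMinorModel_prunedMinor fun w w' h => (hB h).mono Set.sdiff_subset Set.sdiff_subset).del
      fun w => Set.disjoint_sdiff_left.mono_left inducedBall_subset⟩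
  calc (#{e ∈ H.G.edgeFinset | Q e} : ℝ) ≤ K.edgeCount := by
        exact_mod_cast card_filter_le_edgeCount_prunedMinor hQ
    _ ≤ f k * K.card := (density_le_iff (Nat.cast_nonneg _)).1 (hX k K hK)
    _ ≤ f k * H.card := by
        gcongr
        exact Fintype.card_le_of_injective _ Subtype.val_injective

end FGraph

/-- **Lemma 13.** If `Gc` is fractionally `(Be,g)`-fragile, then the expansion of `Gc` is
bounded by `f(k) = 2·g(1/(4k+4), k)`. -/
theorem stmt6 (g : ℝ → ℕ → ℕ) (Gc : Set FGraph)
    (hfrag : ∀ ε : ℝ, 0 < ε → ∀ G ∈ Gc, FGraph.FracPack G (ExCl (g ε)) ε) :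
    ∀ k : ℕ, ∀ G ∈ Gc, ∀ H : FGraph, FGraph.IsMinor k H G →
      H.density ≤ ((2 * g (1 / (4 * (k : ℝ) + 4)) k : ℕ) : ℝ) := by
  intro k G hG H hminor
  obtain ⟨B, -, hdisj, hrad, hadj⟩ := FGraph.isMinor_iff.1 hminor
  choose c _ hc using hrad
  obtain ⟨T, hTcard, hT⟩ := SimpleGraph.exists_edge_blockers hc hadj
  set ε : ℝ := 1 / (4 * k + 4) with hε
  obtain ⟨π, hπ0, hπ1, hπmem, hπthick⟩ := hfrag ε (by positivity) G hG
  have hsurv : ∀ X, π X ≠ 0 →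
      (#{e ∈ H.G.edgeFinset | Disjoint (T e) X} : ℝ) ≤ g ε k * H.card := fun X hX =>
    FGraph.card_filter_le_of_del_mem_exCl hdisj (fun w w' h => hT w w' h X) (hπmem X hX)
  have hkill : ∀ e ∈ H.G.edgeFinset,
      ∑ X ∈ univ.filter (fun X => ¬ Disjoint (T e) X), π X ≤ 1 / 2 := fun e _ =>
    calc _ ≤ #(T e) * ε := sum_filter_not_disjoint_le hπ0 hπthick (T e)
      _ ≤ (2 * k + 2) * ε := by gcongr; exact_mod_cast hTcard e
      _ = 1 / 2 := by rw [hε]; field_simp; ring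
  have hcount := one_sub_mul_card_le hπ0 hπ1 hsurv hkill
  rw [FGraph.density_le_iff (by positivity), FGraph.edgeCount_eq_card_edgeFinset]
  push_cast
  linarith
end
end

section
/- Let 𝒫 be a class property such that every class in 𝒫 has sublinear separators. If 𝒢 is a fractionally 𝒫-fragile class of graphs, then 𝒢 has sublinear separators. -/
open Classical Filter

attribute [local instance] Classical.propDecidable

noncomputable section

/-! Given `ε > 0`, fragility provides `C ∈ P` such that every `G ∈ Gc` has a fractional
`C`-complementary packing of thickness `ε`. Averaging `|X|` against the packing yields a single
`X` with `G − X ∈ C` and `|X| ≤ ε |G|`; adding `X` to the separator of a balanced separation of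
`G − X` gives one of `G`. Hence `s_Gc(n) ≤ s_C(n) + ε n`, and `s_C(n) = o(n)` finishes. -/

theorem tendsto_div_atTop_nhds_zero_of_forall_le_add {f : ℕ → ℝ} (hf : ∀ n, 0 ≤ f n)
    (h : ∀ ε > 0, ∃ g : ℕ → ℝ,
      Tendsto (fun n => g n / n) atTop (nhds 0) ∧ ∀ n, f n ≤ g n + ε * n) :
    Tendsto (fun n => f n / n) atTop (nhds 0) := by
  refine tendsto_order.2 ⟨fun a ha => Eventually.of_forall fun n =>
    ha.trans_le (div_nonneg (hf n) n.cast_nonneg), fun a ha => ?_⟩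
  obtain ⟨g, hg, hfg⟩ := h (a / 2) (half_pos ha)
  filter_upwards [hg.eventually (gt_mem_nhds (half_pos ha)), eventually_gt_atTop 0]
    with n hgn hn
  have hn' : (0 : ℝ) < n := Nat.cast_pos.2 hn
  calc f n / n ≤ (g n + a / 2 * n) / n := by gcongr; exact hfg n
    _ = g n / n + a / 2 := by field_simp
    _ < a := by linarith

namespace FGraph

theorem card_del_le (G : FGraph) (X : Set G.V) : (G.del X).card ≤ G.card :=
  Fintype.card_le_of_injective _ Subtype.val_injective

theorem SepAtMost.mono {G : FGraph} {s t : ℕ} (h : G.SepAtMost s) (hst : s ≤ t) :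
    G.SepAtMost t := by
  obtain ⟨A, B, hsup, hdisj, hA, hB, hs⟩ := h
  exact ⟨A, B, hsup, hdisj, hA, hB, hs.trans hst⟩

/-- The vertex form of a balanced separation `(A, B)`: the sides `L = A \ B` and `R = B \ A`,
with the separator `A ∩ B` as the complement of `L ∪ R`. -/
def VertexSepAtMost (G : FGraph) (s : ℕ) : Prop :=
  ∃ L R : Set G.V, Disjoint L R ∧ (∀ a ∈ L, ∀ b ∈ R, ¬G.G.Adj a b) ∧
    3 * L.ncard ≤ 2 * G.card ∧ 3 * R.ncard ≤ 2 * G.card ∧ (L ∪ R)ᶜ.ncard ≤ s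

theorem SepAtMost.vertexSepAtMost {G : FGraph} {s : ℕ} (h : G.SepAtMost s) :
    G.VertexSepAtMost s := by
  obtain ⟨A, B, hsup, -, hA, hB, hs⟩ := h
  have hcover : A.verts ∪ B.verts = Set.univ := by
    rw [← SimpleGraph.Subgraph.verts_sup, hsup, SimpleGraph.Subgraph.verts_top]
  refine ⟨A.verts \ B.verts, B.verts \ A.verts, disjoint_sdiff_sdiff, ?_, hA, hB, ?_⟩
  · rintro a ⟨-, haB⟩ b ⟨-, hbA⟩ hab
    have hab' : (A ⊔ B).Adj a b := hsup ▸ hab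
    rcases SimpleGraph.Subgraph.sup_adj.mp hab' with hA | hB
    · exact hbA (A.edge_vert hA.symm)
    · exact haB (B.edge_vert hB)
  · convert hs using 2
    ext a
    have := hcover ▸ Set.mem_univ a
    simp only [Set.mem_compl_iff, Set.mem_union, Set.mem_sdiff, Set.mem_inter_iff] at this ⊢
    tauto

theorem VertexSepAtMost.sepAtMost {G : FGraph} {s : ℕ} (h : G.VertexSepAtMost s) :
    G.SepAtMost s := by
  obtain ⟨L, R, hLR, hLR_adj, hL, hR, hs⟩ := h
  -- `A` takes every edge inside `Rᶜ`; any other edge meets `R`, hence avoids `L`, so lies in `B`.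
  let A := (⊤ : G.G.Subgraph).induce Rᶜ
  let B := ((⊤ : G.G.Subgraph).induce Lᶜ).deleteEdges A.edgeSet
  have hL_R (x : G.V) : x ∈ L → x ∉ R := fun hx => Set.disjoint_left.mp hLR hx
  refine ⟨A, B, ?_, ?_, ?_, ?_, ?_⟩
  · ext a b
    · have := hL_R a
      simp only [A, B, SimpleGraph.Subgraph.verts_sup, SimpleGraph.Subgraph.induce_verts,
        SimpleGraph.Subgraph.deleteEdges_verts, SimpleGraph.Subgraph.verts_top, Set.mem_union,
        Set.mem_compl_iff, Set.mem_univ, iff_true]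
      tauto
    · have hab : a ∈ L → b ∈ R → ¬G.G.Adj a b := fun ha hb => hLR_adj a ha b hb
      have hba : b ∈ L → a ∈ R → ¬G.G.Adj a b := fun hb ha h => hLR_adj b hb a ha h.symm
      have := hL_R a
      have := hL_R b
      simp only [A, B, SimpleGraph.Subgraph.sup_adj, SimpleGraph.Subgraph.induce_adj,
        SimpleGraph.Subgraph.top_adj, SimpleGraph.Subgraph.deleteEdges_adj,
        SimpleGraph.Subgraph.mem_edgeSet, Set.mem_compl_iff, not_and]
      tauto
  · refine Set.disjoint_right.2 fun e he => ?_
    induction e using Sym2.ind with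
    | _ a b => exact he.2
  · convert hL using 3
    ext a
    simpa [A, B] using hL_R a
  · convert hR using 3
    ext a
    simpa [A, B] using mt (hL_R a)
  · convert hs using 2
    ext a
    simp [A, B, and_comm]

theorem VertexSepAtMost.of_del {G : FGraph} {X : Finset G.V} {s : ℕ}
    (h : (G.del X).VertexSepAtMost s) : G.VertexSepAtMost (s + X.card) := by
  obtain ⟨L, R, hLR, hLR_adj, hL, hR, hs⟩ := h
  have hcard := card_del_le G X
  have hval := Subtype.val_injective (p := (· ∈ (X : Set G.V)ᶜ))
  have himage (S : Set (G.del X).V) : (Subtype.val '' S).ncard = S.ncard :=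
    Set.ncard_image_of_injective S hval
  have hsep : (Subtype.val '' L ∪ Subtype.val '' R)ᶜ ⊆ Subtype.val '' (L ∪ R)ᶜ ∪ X := by
    intro a ha
    by_cases hX : a ∈ X
    · exact Or.inr hX
    · refine Or.inl ⟨⟨a, hX⟩, fun hLR' => ha ?_, rfl⟩
      rcases hLR' with h | h
      exacts [Or.inl ⟨_, h, rfl⟩, Or.inr ⟨_, h, rfl⟩]
  refine ⟨Subtype.val '' L, Subtype.val '' R, (Set.disjoint_image_iff hval).2 hLR,
    ?_, ?_, ?_, ?_⟩
  · rintro _ ⟨a, ha, rfl⟩ _ ⟨b, hb, rfl⟩ hab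
    exact hLR_adj a ha b hb hab
  · rw [himage]; omega
  · rw [himage]; omega
  · calc _ ≤ (Subtype.val '' (L ∪ R)ᶜ ∪ X).ncard := Set.ncard_le_ncard hsep
      _ ≤ (Subtype.val '' (L ∪ R)ᶜ).ncard + (X : Set G.V).ncard := Set.ncard_union_le _ _
      _ = (L ∪ R)ᶜ.ncard + X.card := congrArg₂ (· + ·) (himage _) (Set.ncard_coe_finset X)
      _ ≤ s + X.card := by omega

theorem SepAtMost.of_del {G : FGraph} {X : Finset G.V} {s : ℕ}
    (h : (G.del X).SepAtMost s) : G.SepAtMost (s + X.card) :=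
  h.vertexSepAtMost.of_del.sepAtMost

theorem sepAtMost_card (G : FGraph) : G.SepAtMost G.card :=
  VertexSepAtMost.sepAtMost ⟨∅, ∅, by simp [Set.ncard_univ, card]⟩

theorem sepAtMost_sepf {C : Set FGraph} {n : ℕ} {G : FGraph} (hG : G ∈ C) (hn : G.card ≤ n) :
    G.SepAtMost (sepf C n) :=
  Nat.sInf_mem (s := {s | ∀ G ∈ C, G.card ≤ n → G.SepAtMost s})
    ⟨n, fun H _ hH => (sepAtMost_card H).mono hH⟩ G hG hn

theorem FracPack.exists_del_mem_card_le {G : FGraph} {C : Set FGraph} {ε : ℝ}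
    (h : G.FracPack C ε) : ∃ X : Finset G.V, G.del X ∈ C ∧ (X.card : ℝ) ≤ ε * G.card := by
  obtain ⟨π, hπ_nonneg, hπ_sum, hπ_mem, hthick⟩ := h
  have hmean : ∑ X, π X * X.card ≤ ε * G.card := calc
    ∑ X, π X * X.card = ∑ X : Finset G.V, ∑ v ∈ X, π X := by simp [mul_comm]
    _ = ∑ v, ∑ X with v ∈ X, π X := Finset.sum_comm' (by simp)
    _ ≤ ∑ _v : G.V, ε := Finset.sum_le_sum fun v _ => hthick v
    _ = ε * G.card := by simp [card, mul_comm]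
  set S := Finset.univ.filter fun X => π X ≠ 0
  have hS : ∑ X ∈ S, π X = 1 := by rw [Finset.sum_filter_ne_zero, hπ_sum]
  have hmeanS : ∑ X ∈ S, π X * X.card ≤ ∑ X ∈ S, π X * (ε * G.card) := by
    rw [← Finset.sum_mul, hS, one_mul, Finset.sum_filter_of_ne fun X _ => left_ne_zero_of_mul]
    exact hmean
  obtain ⟨X, hXS, hX⟩ := Finset.exists_le_of_sum_le (Finset.nonempty_of_sum_ne_zero
    (hS.trans_ne one_ne_zero)) hmeanS
  have hπX : π X ≠ 0 := (Finset.mem_filter.mp hXS).2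
  exact ⟨X, hπ_mem X hπX, le_of_mul_le_mul_left hX ((hπ_nonneg X).lt_of_ne' hπX)⟩

theorem sepf_le_sepf_add_of_witness {C Gc : Set FGraph} {ε : ℝ} (hW : Witness C Gc ε)
    (hε : 0 ≤ ε) (n : ℕ) : (sepf Gc n : ℝ) ≤ sepf C n + ε * n := by
  have hsep : sepf Gc n ≤ sepf C n + ⌊ε * n⌋₊ := by
    refine Nat.sInf_le fun G hG hn => ?_
    obtain ⟨X, hXC, hX⟩ := (hW G hG).exists_del_mem_card_le
    have hXn : X.card ≤ ⌊ε * n⌋₊ := Nat.le_floor (hX.trans (by gcongr))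
    exact (sepAtMost_sepf hXC ((card_del_le G X).trans hn)).of_del.mono (by omega)
  calc (sepf Gc n : ℝ) ≤ sepf C n + ⌊ε * n⌋₊ := by exact_mod_cast hsep
    _ ≤ sepf C n + ε * n := by gcongr; exact Nat.floor_le (by positivity)

end FGraph

/-- **Lemma 14.** If every class in `P` has sublinear separators and `Gc` is fractionally
`P`-fragile, then `Gc` has sublinear separators. -/
theorem stmt7 (P : Set (Set FGraph)) (h : ∀ C ∈ P, FGraph.SublinearSep C)
    (Gc : Set FGraph) (hfrag : FGraph.FracFragile P Gc) :
    FGraph.SublinearSep Gc := by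
  refine tendsto_div_atTop_nhds_zero_of_forall_le_add (fun n => Nat.cast_nonneg _)
    fun ε hε => ?_
  obtain ⟨C, hCP, hW⟩ := hfrag ε hε
  exact ⟨fun n => FGraph.sepf C n, h C hCP, FGraph.sepf_le_sepf_add_of_witness hW hε.le⟩
end
end

section
/- Let 𝒢 be a class of graphs, let 𝒞 be a class of graphs in which every connected component of every graph has at most s vertices, and suppose that every graph in 𝒢 has a fractional 𝒞-complementary packing of thickness at most 1/3. Then every graph in 𝒢 has maximum degree at most 2s − 2. In particular, every fractionally Vs-fragile class of graphs has bounded maximum degree. -/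
open Classical Filter

attribute [local instance] Classical.propDecidable

noncomputable section

/-! The removal of a fractional packing of thickness `ε` destroys, on average, at most `ε · d`
of the `d` neighbours of a vertex `v`, while with probability at least `1 - ε` it keeps `v`.
When `v` survives, it lies in a component of size at most `s`, so all but at most `s - 1` of its
neighbours must have been removed. Hence `(1 - ε)(d + 1 - s) ≤ ε d`, which for `ε = 1/3` reads
`d ≤ 2s - 2`. -/

theorem Finset.sum_mul_card_inter_eq_sum_sum_filter_mem {α : Type*} [Fintype α]
    (π : Finset α → ℝ) (S : Finset α) :
    ∑ X : Finset α, π X * (S ∩ X).card = ∑ u ∈ S, ∑ X ∈ univ.filter (fun X => u ∈ X), π X := by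
  simp only [Finset.sum_filter]
  rw [Finset.sum_comm]
  refine Finset.sum_congr rfl fun X _ => ?_
  rw [Finset.sum_ite_mem, Finset.sum_const, nsmul_eq_mul, mul_comm]

namespace FGraph

theorem ncard_neighborSet_diff_add_one_le_compSize {G : FGraph} {X : Set G.V} {v : G.V}
    (hv : v ∉ X) : (G.G.neighborSet v \ X).ncard + 1 ≤ (G.del X).compSize ⟨v, hv⟩ := by
  let H := G.del X
  have hsub : insert v (G.G.neighborSet v \ X) ⊆
      Subtype.val '' (H.G.connectedComponentMk ⟨v, hv⟩).supp := by
    rintro u (rfl | ⟨hadj, huX⟩)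
    · exact ⟨⟨u, hv⟩, rfl, rfl⟩
    · have hadj' : H.G.Adj ⟨v, hv⟩ ⟨u, huX⟩ := hadj
      exact ⟨⟨u, huX⟩, SimpleGraph.ConnectedComponent.sound hadj'.reachable.symm, rfl⟩
  have hvN : v ∉ G.G.neighborSet v \ X := fun h => G.G.irrefl h.1
  calc (G.G.neighborSet v \ X).ncard + 1
      = (insert v (G.G.neighborSet v \ X)).ncard := (Set.ncard_insert_of_notMem hvN).symm
    _ ≤ (Subtype.val '' (H.G.connectedComponentMk ⟨v, hv⟩).supp).ncard :=
        Set.ncard_le_ncard hsub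
    _ = H.compSize ⟨v, hv⟩ := Set.ncard_image_of_injective _ Subtype.val_injective

theorem FracPack.one_sub_mul_le_mul_ncard_neighborSet {G : FGraph} {C : Set FGraph} {ε : ℝ}
    {s : ℕ} (hC : ∀ H ∈ C, ∀ w : H.V, H.compSize w ≤ s) (hG : G.FracPack C ε) (v : G.V)
    (hs : s ≤ (G.G.neighborSet v).ncard + 1) :
    (1 - ε) * ((G.G.neighborSet v).ncard + 1 - s : ℝ) ≤ ε * (G.G.neighborSet v).ncard := by
  obtain ⟨π, hπ0, hπ1, hπC, hπε⟩ := hG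
  set N := (G.G.neighborSet v).toFinset
  rw [Set.ncard_eq_toFinset_card'] at hs ⊢
  set a := ∑ X ∈ Finset.univ.filter (fun X : Finset G.V => v ∈ X), π X
  have hsurvive : ∑ X ∈ Finset.univ.filter (fun X : Finset G.V => v ∉ X), π X = 1 - a := by
    rw [← hπ1, ← Finset.sum_filter_add_sum_filter_not Finset.univ (fun X => v ∈ X)]
    ring
  have hkept : ∀ X : Finset G.V, π X ≠ 0 → v ∉ X → (N.card + 1 - s : ℝ) ≤ (N ∩ X).card := by
    intro X hX hvX
    have hcomp := (ncard_neighborSet_diff_add_one_le_compSize hvX).trans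
      (hC _ (hπC X hX) ⟨v, hvX⟩)
    have hdiff : (G.G.neighborSet v \ X).ncard = (N \ X).card := by
      rw [← Set.ncard_coe_finset, Finset.coe_sdiff, Set.coe_toFinset]
    have hsplit := Finset.card_inter_add_card_sdiff N X
    have : N.card + 1 ≤ s + (N ∩ X).card := by omega
    rw [sub_le_iff_le_add']
    exact_mod_cast this
  calc (1 - ε) * (N.card + 1 - s : ℝ)
      ≤ (1 - a) * (N.card + 1 - s) := by
        have : (s : ℝ) ≤ N.card + 1 := by exact_mod_cast hs
        exact mul_le_mul_of_nonneg_right (by linarith [hπε v]) (by linarith)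
    _ = ∑ X ∈ Finset.univ.filter (fun X : Finset G.V => v ∉ X), π X * (N.card + 1 - s) := by
        rw [← hsurvive, Finset.sum_mul]
    _ ≤ ∑ X ∈ Finset.univ.filter (fun X : Finset G.V => v ∉ X), π X * (N ∩ X).card := by
        refine Finset.sum_le_sum fun X hX => ?_
        rcases eq_or_ne (π X) 0 with h0 | h0
        · simp [h0]
        · exact mul_le_mul_of_nonneg_left (hkept X h0 (Finset.mem_filter.mp hX).2) (hπ0 X)
    _ ≤ ∑ X, π X * (N ∩ X).card :=
        Finset.sum_le_sum_of_subset_of_nonneg (Finset.filter_subset _ _)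
          fun X _ _ => mul_nonneg (hπ0 X) (Nat.cast_nonneg _)
    _ = ∑ u ∈ N, ∑ X ∈ Finset.univ.filter (fun X => u ∈ X), π X :=
        Finset.sum_mul_card_inter_eq_sum_sum_filter_mem π N
    _ ≤ ∑ _u ∈ N, ε := Finset.sum_le_sum fun u _ => hπε u
    _ = ε * N.card := by rw [Finset.sum_const, nsmul_eq_mul, mul_comm]

theorem FracPack.ncard_neighborSet_le {G : FGraph} {C : Set FGraph} {s : ℕ}
    (hC : ∀ H ∈ C, ∀ w : H.V, H.compSize w ≤ s) (hG : G.FracPack C (1 / 3)) (v : G.V) :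
    ((G.G.neighborSet v).ncard : ℤ) ≤ 2 * s - 2 := by
  rcases le_or_gt s ((G.G.neighborSet v).ncard + 1) with hs | hs
  · have := hG.one_sub_mul_le_mul_ncard_neighborSet hC v hs
    have : ((G.G.neighborSet v).ncard : ℝ) ≤ 2 * s - 2 := by linarith
    exact_mod_cast this
  · omega

end FGraph

/-- **Observation 15.** If every component of every graph of `C` has at most `s` vertices
and every graph in `Gc` has a fractional `C`-complementary packing of thickness at most
`1/3`, then every graph in `Gc` has maximum degree at most `2s - 2`.  In particular, every
fractionally `Vs`-fragile class has bounded maximum degree. -/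
theorem stmt8 :
    (∀ (Gc C : Set FGraph) (s : ℕ),
      (∀ G ∈ C, ∀ v : G.V, G.compSize v ≤ s) →
      (∀ G ∈ Gc, FGraph.FracPack G C ((1 : ℝ) / 3)) →
      ∀ G ∈ Gc, ∀ v : G.V, ((G.G.neighborSet v).ncard : ℤ) ≤ 2 * (s : ℤ) - 2) ∧
    (∀ Gc : Set FGraph, FGraph.FracFragile FGraph.Vs Gc → FGraph.BddMaxDeg Gc) := by
  refine ⟨fun Gc C s hC hW G hG v => (hW G hG).ncard_neighborSet_le hC v, fun Gc hGc => ?_⟩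
  obtain ⟨C, ⟨t, ht⟩, hW⟩ := hGc (1 / 3) (by norm_num)
  refine ⟨2 * t, fun G hG v => ?_⟩
  have := (hW G hG).ncard_neighborSet_le ht v
  omega
end
end

section
/- Every fractionally Tw-fragile class of graphs with bounded maximum degree is fractionally Vs-fragile. -/
open Classical Filter

attribute [local instance] Classical.propDecidable

noncomputable section

/-!
Bounded treewidth `k` and maximum degree `Δ` give every graph a layering `lev`: levels change by
at most one along edges, and every component of `{lev ≥ a}` has at most `w = w(k, Δ)` vertices
on level `a`. It is built recursively: level `0` is a bag consisting of the attachment of the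
current piece, a separator that cuts this attachment into small shares (obtained by iterating the
balanced separators given by the bags of a tree decomposition), and one more vertex; every
component of the rest then has a small attachment to the bag and is layered in turn.
A component of `m` consecutive levels has at most `((Δ + 1) w + 1) ^ m` vertices, so deleting a
uniformly random residue class of levels modulo `m + 1` is a fractional packing of thickness
`1 / (m + 1)` with bounded components. Doing this in every `G − X` of a fractional `Tw`-packing
of thickness `ε / 2` gives thickness `ε / 2 + 1 / (m + 1) ≤ ε`.
-/

open Finset

namespace SimpleGraph

section
theorem Reachable.closure_induction {V : Type*} {H : SimpleGraph V} {P : V → Prop} {u v : V}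
    (h : H.Reachable u v) (hu : P u)
    (hstep : ∀ x y, H.Reachable u x → P x → H.Adj x y → P y) : P v := by
  obtain ⟨p⟩ := h
  suffices H.Reachable u v ∧ P v from this.2
  induction p using Walk.concatRec with
  | Hnil => exact ⟨.rfl, hu⟩
  | Hconcat p hadj ih =>
    obtain ⟨hr, hP⟩ := ih hu hstep
    exact ⟨hr.trans hadj.reachable, hstep _ _ hr hP hadj⟩

variable {V : Type*} (G : SimpleGraph V)

def within (X : Finset V) : SimpleGraph V where
  Adj u v := G.Adj u v ∧ u ∈ X ∧ v ∈ X
  symm := ⟨fun _ _ h => ⟨h.1.symm, h.2.2, h.2.1⟩⟩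
  loopless := ⟨fun _ h => h.1.ne rfl⟩

def compIn (X : Finset V) (v : V) : Finset V := X.filter ((G.within X).Reachable v)

variable {G} {X Y : Finset V} {u v w : V}

theorem within_mono (h : X ⊆ Y) : G.within X ≤ G.within Y :=
  fun _ _ hab => ⟨hab.1, h hab.2.1, h hab.2.2⟩

theorem eq_or_mem_of_reachable_within (h : (G.within X).Reachable u v) : u = v ∨ u ∈ X := by
  obtain ⟨p⟩ := h
  cases p with
  | nil => exact .inl rfl
  | cons h _ => exact .inr h.2.1

theorem reachable_within_of_forall_mem (h : (G.within X).Reachable u v)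
    (hY : ∀ w ∈ X, (G.within X).Reachable u w → w ∈ Y) : (G.within Y).Reachable u v :=
  h.closure_induction .rfl fun x y hx hxY hxy =>
    hxY.trans (Adj.reachable ⟨hxy.1, hY x hxy.2.1 hx, hY y hxy.2.2 (hx.trans hxy.reachable)⟩)

theorem mem_compIn : w ∈ G.compIn X v ↔ w ∈ X ∧ (G.within X).Reachable v w := mem_filter

theorem compIn_subset : G.compIn X v ⊆ X := filter_subset _ _

theorem self_mem_compIn (hv : v ∈ X) : v ∈ G.compIn X v := mem_compIn.2 ⟨hv, .rfl⟩

theorem compIn_of_notMem (hv : v ∉ X) : G.compIn X v = ∅ := by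
  ext w
  simp only [mem_compIn, notMem_empty, iff_false, not_and]
  intro hw h
  exact (eq_or_mem_of_reachable_within h).elim (fun h => hv (h ▸ hw)) hv

theorem compIn_eq_of_reachable (h : (G.within X).Reachable v w) : G.compIn X v = G.compIn X w := by
  ext x
  simp only [mem_compIn]
  exact and_congr_right fun _ => ⟨h.symm.trans, h.trans⟩

theorem compIn_eq_of_mem (hw : w ∈ G.compIn X v) : G.compIn X w = G.compIn X v :=
  (compIn_eq_of_reachable (mem_compIn.1 hw).2).symm

theorem compIn_mono (h : X ⊆ Y) : G.compIn X v ⊆ G.compIn Y v := fun _ hw =>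
  mem_compIn.2 ⟨h (mem_compIn.1 hw).1, (mem_compIn.1 hw).2.mono (within_mono h)⟩

theorem disjoint_compIn (h : G.compIn X v ≠ G.compIn X w) :
    Disjoint (G.compIn X v) (G.compIn X w) :=
  Finset.disjoint_left.2 fun _ hv hw => h ((compIn_eq_of_mem hv).symm.trans (compIn_eq_of_mem hw))

theorem compIn_subset_compIn_inter (h : Y ⊆ X) :
    G.compIn Y v ⊆ G.compIn (Y ∩ G.compIn X v) v := by
  intro w hw
  obtain ⟨hwY, hvw⟩ := mem_compIn.1 hw
  refine mem_compIn.2 ⟨mem_inter.2 ⟨hwY, compIn_mono h hw⟩, ?_⟩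
  exact reachable_within_of_forall_mem hvw fun x hx hvx =>
    mem_inter.2 ⟨hx, compIn_mono h (mem_compIn.2 ⟨hx, hvx⟩)⟩

end

section
variable {V : Type*} (G : SimpleGraph V)

def nbhdIn (B X : Finset V) : Finset V := X.filter fun x => ∃ b ∈ B, G.Adj b x

def HasBalancedSeparators (s : ℕ) : Prop :=
  ∀ A W : Finset V, ∃ Z ⊆ A, #Z ≤ s ∧ ∀ v, 2 * #(W ∩ G.compIn (A \ Z) v) ≤ #W

variable {G} {B B' X Y : Finset V} {Δ s : ℕ}

theorem nbhdIn_mono (h : X ⊆ Y) : G.nbhdIn B X ⊆ G.nbhdIn B Y :=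
  fun _ hx => mem_filter.2 ⟨h (mem_filter.1 hx).1, (mem_filter.1 hx).2⟩

theorem nbhdIn_union : G.nbhdIn (B ∪ B') X = G.nbhdIn B X ∪ G.nbhdIn B' X := by
  ext x
  simp only [nbhdIn, mem_filter, mem_union, or_and_right, exists_or, and_or_left]

theorem card_nbhdIn_le [Fintype V] (hdeg : ∀ v, G.degree v ≤ Δ) (B X : Finset V) :
    #(G.nbhdIn B X) ≤ Δ * #B :=
  calc #(G.nbhdIn B X) ≤ #(B.biUnion fun b => G.neighborFinset b) := by
        refine card_le_card fun x hx => ?_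
        obtain ⟨-, b, hb, hbx⟩ := mem_filter.1 hx
        exact mem_biUnion.2 ⟨b, hb, (mem_neighborFinset _ _ _).2 hbx⟩
    _ ≤ ∑ b ∈ B, G.degree b := card_biUnion_le
    _ ≤ Δ * #B := by
        rw [mul_comm, ← smul_eq_mul, ← sum_const]
        exact sum_le_sum fun b _ => hdeg b

theorem card_le_of_forall_lt_mul_card_inter {𝒦 : Finset (Finset V)} {W : Finset V} {N : ℕ}
    (hdisj : (𝒦 : Set (Finset V)).PairwiseDisjoint id) (h𝒦 : ∀ K ∈ 𝒦, #W < N * #(W ∩ K)) :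
    #𝒦 ≤ N := by
  have hsum : ∑ K ∈ 𝒦, #(W ∩ K) ≤ #W := by
    rw [← card_biUnion (t := fun K => W ∩ K) fun K hK K' hK' hne =>
      disjoint_of_subset_left inter_subset_right
        (disjoint_of_subset_right inter_subset_right (hdisj hK hK' hne))]
    exact card_le_card (biUnion_subset.2 fun _ _ => inter_subset_left)
  have : #𝒦 * (#W + 1) ≤ N * #W :=
    calc #𝒦 * (#W + 1) = ∑ _K ∈ 𝒦, (#W + 1) := by rw [sum_const, smul_eq_mul]
      _ ≤ ∑ K ∈ 𝒦, N * #(W ∩ K) := sum_le_sum h𝒦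
      _ ≤ N * #W := by rw [← mul_sum]; exact Nat.mul_le_mul_left _ hsum
  by_contra! hN
  nlinarith

theorem pairwiseDisjoint_compIn (X : Finset V) :
    (X.image (G.compIn X) : Set (Finset V)).PairwiseDisjoint id := by
  rintro _ hK _ hK' hne
  obtain ⟨v, -, rfl⟩ := mem_image.1 hK
  obtain ⟨v', -, rfl⟩ := mem_image.1 hK'
  exact disjoint_compIn hne

/-- Separate `W` inside each component of `A \ Z` holding more than a `1/(2N)`-share of `W`;
there are at most `2N` of them. -/
theorem HasBalancedSeparators.refine (hsep : G.HasBalancedSeparators s) {A W Z : Finset V}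
    {N : ℕ} (hZA : Z ⊆ A) (hZ : ∀ v, N * #(W ∩ G.compIn (A \ Z) v) ≤ #W) :
    ∃ Z' ⊆ A, #Z' ≤ #Z + 2 * N * s ∧ ∀ v, 2 * N * #(W ∩ G.compIn (A \ Z') v) ≤ #W := by
  choose sep hsepK hsep_card hsep_bal using fun K => hsep K (W ∩ K)
  set X := A \ Z
  set 𝒦 := (X.image (G.compIn X)).filter fun K => #W < 2 * N * #(W ∩ K)
  have h𝒦 : #𝒦 ≤ 2 * N := card_le_of_forall_lt_mul_card_inter
    ((pairwiseDisjoint_compIn X).subset (filter_subset _ _)) fun K hK => (mem_filter.1 hK).2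
  refine ⟨Z ∪ 𝒦.biUnion sep, union_subset hZA (biUnion_subset.2 fun K hK => ?_), ?_, fun v => ?_⟩
  · obtain ⟨v, -, rfl⟩ := mem_image.1 (mem_filter.1 hK).1
    exact (hsepK _).trans (compIn_subset.trans sdiff_subset)
  · calc #(Z ∪ 𝒦.biUnion sep) ≤ #Z + ∑ K ∈ 𝒦, #(sep K) :=
          (card_union_le _ _).trans (Nat.add_le_add_left card_biUnion_le _)
      _ ≤ #Z + #𝒦 * s := by
          rw [← smul_eq_mul, ← sum_const]
          exact Nat.add_le_add_left (sum_le_sum fun K _ => hsep_card K) _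
      _ ≤ #Z + 2 * N * s := Nat.add_le_add_left (Nat.mul_le_mul_right _ h𝒦) _
  set Y := A \ (Z ∪ 𝒦.biUnion sep)
  set K := G.compIn X v
  have hYX : Y ⊆ X := sdiff_subset_sdiff subset_rfl subset_union_left
  by_cases hK : K ∈ 𝒦
  · have hsub : G.compIn Y v ⊆ G.compIn (K \ sep K) v :=
      (compIn_subset_compIn_inter hYX).trans <| compIn_mono fun x hx =>
        mem_sdiff.2 ⟨(mem_inter.1 hx).2, fun hxs => (mem_sdiff.1 (mem_inter.1 hx).1).2
          (mem_union_right _ (mem_biUnion.2 ⟨K, hK, hxs⟩))⟩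
    have h1 : #(W ∩ G.compIn Y v) ≤ #(W ∩ K ∩ G.compIn (K \ sep K) v) :=
      card_le_card fun x hx => by
        obtain ⟨hxW, hxY⟩ := mem_inter.1 hx
        exact mem_inter.2 ⟨mem_inter.2 ⟨hxW, compIn_mono hYX hxY⟩, hsub hxY⟩
    have h2 := hsep_bal K v
    have h3 := hZ v
    calc 2 * N * #(W ∩ G.compIn Y v) ≤ N * (2 * #(W ∩ K ∩ G.compIn (K \ sep K) v)) := by
          rw [mul_comm 2 N, mul_assoc]; exact Nat.mul_le_mul_left _ (by omega)
      _ ≤ N * #(W ∩ K) := Nat.mul_le_mul_left _ h2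
      _ ≤ #W := h3
  · have hlight : 2 * N * #(W ∩ K) ≤ #W := by
      by_cases hv : v ∈ X
      · exact not_lt.1 fun h => hK (mem_filter.2 ⟨mem_image_of_mem _ hv, h⟩)
      · simp [K, compIn_of_notMem hv]
    exact le_trans (Nat.mul_le_mul_left _ (card_le_card
      (inter_subset_inter_left (compIn_mono hYX)))) hlight

theorem HasBalancedSeparators.iterate (hsep : G.HasBalancedSeparators s) (r : ℕ)
    (A W : Finset V) :
    ∃ Z ⊆ A, #Z ≤ s * 2 ^ (r + 1) ∧ ∀ v, 2 ^ r * #(W ∩ G.compIn (A \ Z) v) ≤ #W := by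
  induction r with
  | zero =>
    exact ⟨∅, empty_subset _, by simp, fun v => by simpa using card_le_card inter_subset_left⟩
  | succ r ih =>
    obtain ⟨Z, hZA, hZ, hbal⟩ := ih
    obtain ⟨Z', hZ'A, hZ', hbal'⟩ := hsep.refine hZA hbal
    refine ⟨Z', hZ'A, ?_, fun v => by simpa [pow_succ, mul_comm] using hbal' v⟩
    calc #Z' ≤ s * 2 ^ (r + 1) + 2 * 2 ^ r * s := hZ'.trans (Nat.add_le_add_right hZ _)
      _ = s * 2 ^ (r + 1 + 1) := by ring

end

section
variable {ι : Type*} [Fintype ι] {T : SimpleGraph ι} {a b u x y : ι}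

theorem within_erase_le_deleteEdges (a c : ι) :
    T.within (univ.erase a) ≤ T.deleteEdges {s(a, c)} := by
  intro x y ⟨hxy, hx, hy⟩
  refine (deleteEdges_adj).2 ⟨hxy, fun h => ?_⟩
  rcases Sym2.eq_iff.1 (Set.mem_singleton_iff.1 h) with ⟨rfl, -⟩ | ⟨-, rfl⟩
  · exact (mem_erase.1 hx).1 rfl
  · exact (mem_erase.1 hy).1 rfl

theorem reachable_within_erase_of_walk (p : T.Walk x y) (hp : u ∉ p.support) :
    (T.within (univ.erase u)).Reachable x y := by
  induction p with
  | nil => rfl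
  | cons h q ih =>
    rw [Walk.support_cons, List.mem_cons, not_or] at hp
    exact Adj.reachable (G := T.within (univ.erase u)) ⟨h, mem_erase.2 ⟨Ne.symm hp.1, mem_univ _⟩,
      mem_erase.2 ⟨fun h => hp.2 (h ▸ q.start_mem_support), mem_univ _⟩⟩ |>.trans (ih hp.2)

theorem IsAcyclic.not_reachable_within_erase (hT : T.IsAcyclic) (hua : T.Adj u a)
    (hab : T.Adj a b) (hbu : b ≠ u) : ¬ (T.within (univ.erase a)).Reachable u b := by
  intro h
  refine isBridge_iff.1 (isAcyclic_iff_forall_adj_isBridge.1 hT hua.symm) ?_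
  refine ((h.mono (within_erase_le_deleteEdges a u)).trans (Adj.reachable ?_)).symm
  refine (deleteEdges_adj).2 ⟨hab.symm, fun he => ?_⟩
  rcases Sym2.eq_iff.1 (Set.mem_singleton_iff.1 he) with ⟨rfl, -⟩ | ⟨rfl, -⟩
  · exact hab.ne rfl
  · exact hbu rfl

theorem IsTree.exists_apply_apply_eq (hT : T.IsTree) (f : ι → ι) (hf : ∀ u, T.Adj u (f u)) :
    ∃ u, f (f u) = u := by
  by_contra! hback
  -- otherwise the side of `f u` in `T - u` strictly shrinks from `u` to `f u`
  let size u := #{z | (T.within (univ.erase u)).Reachable z (f u)}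
  have hdesc : ∀ u, size (f u) < size u := by
    intro u
    refine card_lt_card ⟨fun z hz => mem_filter.2 ⟨mem_univ _, ?_⟩, fun hsub => ?_⟩
    · have hzb := (mem_filter.1 hz).2
      have hzb' : (T.within (univ.erase u)).Reachable z (f (f u)) :=
        reachable_within_of_forall_mem hzb fun w hw hzw => mem_erase.2 ⟨fun hwu =>
          hT.isAcyclic.not_reachable_within_erase (hf u) (hf (f u)) (hback u)
            (hwu ▸ hzw.symm.trans hzb), mem_univ _⟩
      exact hzb'.trans (Adj.reachable ⟨(hf (f u)).symm,
        mem_erase.2 ⟨hback u, mem_univ _⟩, mem_erase.2 ⟨(hf u).ne.symm, mem_univ _⟩⟩)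
    · have := (mem_filter.1 (hsub (mem_filter.2 ⟨mem_univ (f u), .rfl⟩))).2
      rcases eq_or_mem_of_reachable_within this with h | h
      · exact (hf (f u)).ne h
      · exact (mem_erase.1 h).1 rfl
  obtain ⟨u, -, hu⟩ := exists_min_image univ size (univ_nonempty_iff.2 hT.connected.nonempty)
  exact (hu (f u) (mem_univ _)).not_gt (hdesc u)

end

section
variable {V : Type*} (G : SimpleGraph V)

def IsLayeringOn (A : Finset V) (lev : V → ℕ) (w : ℕ) : Prop :=
  (∀ u ∈ A, ∀ v ∈ A, G.Adj u v → lev u ≤ lev v + 1) ∧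
  ∀ a v, #((G.compIn (A.filter (a ≤ lev ·)) v).filter (lev · = a)) ≤ w

variable {G} {A B : Finset V} {w : ℕ}

theorem isLayeringOn_empty (lev : V → ℕ) (w : ℕ) : G.IsLayeringOn ∅ lev w :=
  ⟨by simp, fun a v => by simp [compIn_of_notMem]⟩

section Glue

variable {levK : Finset V → V → ℕ} {lev : V → ℕ}
  (hlev : ∀ x, lev x = if x ∈ B then 0 else levK (G.compIn (A \ B) x) x + 1)
  (h0 : ∀ x ∈ A \ B, ∀ y ∈ G.nbhdIn B (A \ B) ∩ G.compIn (A \ B) x,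
    levK (G.compIn (A \ B) x) y = 0)
  (hlay : ∀ x ∈ A \ B, G.IsLayeringOn (G.compIn (A \ B) x) (levK (G.compIn (A \ B) x)) w)

include hlev h0 hlay in
theorem IsLayeringOn.glue_adj (u : V) (hu : u ∈ A) (v : V) (hv : v ∈ A) (huv : G.Adj u v) :
    lev u ≤ lev v + 1 := by
  rw [hlev, hlev]
  by_cases huB : u ∈ B
  · simp [huB]
  have huAB : u ∈ A \ B := mem_sdiff.2 ⟨hu, huB⟩
  by_cases hvB : v ∈ B
  · have := h0 u huAB u (mem_inter.2 ⟨mem_filter.2 ⟨huAB, v, hvB, huv.symm⟩, self_mem_compIn huAB⟩)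
    simp [huB, hvB, this]
  have hvAB : v ∈ A \ B := mem_sdiff.2 ⟨hv, hvB⟩
  have hK : G.compIn (A \ B) v = G.compIn (A \ B) u :=
    compIn_eq_of_mem (mem_compIn.2 ⟨hvAB, Adj.reachable ⟨huv, huAB, hvAB⟩⟩)
  have := (hlay u huAB).1 u (self_mem_compIn huAB) v (hK ▸ self_mem_compIn hvAB) huv
  simp only [huB, hvB, if_false, hK]
  omega

include hlev hlay in
theorem IsLayeringOn.glue_card (hB : #B ≤ w) (a : ℕ) (v : V) :
    #((G.compIn (A.filter (a ≤ lev ·)) v).filter (lev · = a)) ≤ w := by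
  cases a with
  | zero =>
    refine (card_le_card fun x hx => ?_).trans hB
    by_contra hxB
    simp [hlev, hxB] at hx
  | succ a =>
    set SL := A.filter (a + 1 ≤ lev ·)
    have hSL : SL ⊆ A \ B := fun x hx => by
      obtain ⟨hxA, hx⟩ := mem_filter.1 hx
      exact mem_sdiff.2 ⟨hxA, fun hxB => by simp [hlev, hxB] at hx⟩
    by_cases hv : v ∈ SL
    swap
    · simp [compIn_of_notMem hv]
    have hcardK := (hlay v (hSL hv)).2 a v
    set K := G.compIn (A \ B) v
    have key : ∀ x ∈ SL, (G.within SL).Reachable v x →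
        x ∈ K ∧ lev x = levK K x + 1 := fun x hx hvx => by
      have hxK : x ∈ K := mem_compIn.2 ⟨hSL hx, hvx.mono (within_mono hSL)⟩
      refine ⟨hxK, ?_⟩
      rw [hlev, if_neg (mem_sdiff.1 (hSL hx)).2, compIn_eq_of_mem hxK]
    refine le_trans (card_le_card fun x hx => ?_) hcardK
    obtain ⟨hxc, hxa⟩ := mem_filter.1 hx
    obtain ⟨hxSL, hvx⟩ := mem_compIn.1 hxc
    obtain ⟨hxK, hxlev⟩ := key x hxSL hvx
    refine mem_filter.2 ⟨mem_compIn.2 ⟨mem_filter.2 ⟨hxK, by omega⟩, ?_⟩, by omega⟩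
    refine reachable_within_of_forall_mem hvx fun y hy hvy => ?_
    obtain ⟨hyK, hylev⟩ := key y hy hvy
    exact mem_filter.2 ⟨hyK, by have := (mem_filter.1 hy).2; omega⟩

include hlev h0 hlay in
theorem IsLayeringOn.glue (hB : #B ≤ w) : G.IsLayeringOn A lev w :=
  ⟨IsLayeringOn.glue_adj hlev h0 hlay, IsLayeringOn.glue_card hlev hlay hB⟩

end Glue

end

section
variable {V : Type*} [Fintype V] {G : SimpleGraph V} {s Δ : ℕ}

/-- Half of this bound absorbs the part of the old attachment that the iterated separator leaves
to a piece, the other half the neighbours of the separator and of the one extra vertex. -/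
def attachBound (s Δ : ℕ) : ℕ := 2 * Δ * (s * 2 ^ (Δ + 2) + 1)

def bagBound (s Δ : ℕ) : ℕ := attachBound s Δ + s * 2 ^ (Δ + 2) + 1

theorem card_nbhdIn_inter_compIn_le (hdeg : ∀ v, G.degree v ≤ Δ) (A S Z : Finset V) (a₀ v : V) :
    #(G.nbhdIn (S ∪ Z ∪ {a₀}) (A \ (S ∪ Z ∪ {a₀})) ∩ G.compIn (A \ (S ∪ Z ∪ {a₀})) v) ≤
      #(G.nbhdIn S (A \ S) ∩ G.compIn ((A \ S) \ Z) v) + Δ * #Z + Δ := by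
  set B := S ∪ Z ∪ {a₀}
  have hAB : A \ B ⊆ (A \ S) \ Z := fun x hx => by
    simp only [B, Finset.mem_sdiff, Finset.mem_union, not_or] at hx ⊢
    exact ⟨⟨hx.1, hx.2.1.1⟩, hx.2.1.2⟩
  have hsplit : G.nbhdIn B (A \ B) ∩ G.compIn (A \ B) v ⊆
      (G.nbhdIn S (A \ S) ∩ G.compIn ((A \ S) \ Z) v) ∪ G.nbhdIn Z (A \ B) ∪
        G.nbhdIn {a₀} (A \ B) := by
    intro x hx
    obtain ⟨hxN, hxC⟩ := mem_inter.1 hx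
    rw [nbhdIn_union, nbhdIn_union] at hxN
    rcases mem_union.1 hxN with hxN | hxN
    · rcases mem_union.1 hxN with hxN | hxN
      · exact mem_union_left _ (mem_union_left _ (mem_inter.2
          ⟨nbhdIn_mono (hAB.trans sdiff_subset) hxN, compIn_mono hAB hxC⟩))
      · exact mem_union_left _ (mem_union_right _ hxN)
    · exact mem_union_right _ hxN
  have h₁ := card_nbhdIn_le hdeg Z (A \ B)
  have h₂ := card_nbhdIn_le hdeg {a₀} (A \ B)
  have h₃ := card_union_le (G.nbhdIn S (A \ S) ∩ G.compIn ((A \ S) \ Z) v ∪ G.nbhdIn Z (A \ B))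
    (G.nbhdIn {a₀} (A \ B))
  have h₄ := card_union_le (G.nbhdIn S (A \ S) ∩ G.compIn ((A \ S) \ Z) v) (G.nbhdIn Z (A \ B))
  rw [card_singleton] at h₂
  have := card_le_card hsplit
  omega

theorem HasBalancedSeparators.exists_bag (hsep : G.HasBalancedSeparators s)
    (hdeg : ∀ v, G.degree v ≤ Δ) {A S : Finset V} (hSA : S ⊆ A) (hS : #S ≤ attachBound s Δ)
    {a₀ : V} (ha₀ : a₀ ∈ A) :
    ∃ B, S ⊆ B ∧ B ⊆ A ∧ a₀ ∈ B ∧ #B ≤ bagBound s Δ ∧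
      ∀ v, #(G.nbhdIn B (A \ B) ∩ G.compIn (A \ B) v) ≤ attachBound s Δ := by
  obtain ⟨Z, hZA, hZ, hbal⟩ := hsep.iterate (Δ + 1) (A \ S) (G.nbhdIn S (A \ S))
  set P := s * 2 ^ (Δ + 2)
  replace hZ : #Z ≤ P := hZ
  refine ⟨S ∪ Z ∪ {a₀}, subset_union_left.trans subset_union_left,
    union_subset (union_subset hSA (hZA.trans sdiff_subset)) (singleton_subset_iff.2 ha₀),
    by simp, ?_, fun v => (card_nbhdIn_inter_compIn_le hdeg A S Z a₀ v).trans ?_⟩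
  · have := card_union_le (S ∪ Z) {a₀}
    have := card_union_le S Z
    rw [card_singleton] at *
    unfold bagBound
    omega
  set c := #(G.nbhdIn S (A \ S) ∩ G.compIn ((A \ S) \ Z) v)
  have hc : 2 ^ (Δ + 1) * c ≤ 2 ^ (Δ + 1) * (Δ * (P + 1)) :=
    calc 2 ^ (Δ + 1) * c ≤ #(G.nbhdIn S (A \ S)) := hbal v
      _ ≤ Δ * #S := card_nbhdIn_le hdeg _ _
      _ ≤ Δ * attachBound s Δ := Nat.mul_le_mul_left _ hS
      _ = 2 * Δ * (Δ * (P + 1)) := by unfold attachBound; ring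
      _ ≤ _ := Nat.mul_le_mul_right _ (by
          have := Nat.lt_two_pow_self (n := Δ); rw [pow_succ]; omega)
  replace hc := Nat.le_of_mul_le_mul_left hc (by positivity)
  have hZ' : Δ * #Z ≤ Δ * P := Nat.mul_le_mul_left _ hZ
  have : attachBound s Δ = Δ * (P + 1) + Δ * P + Δ := by unfold attachBound; ring
  omega

theorem HasBalancedSeparators.exists_isLayeringOn (hsep : G.HasBalancedSeparators s)
    (hdeg : ∀ v, G.degree v ≤ Δ) (A : Finset V) :
    ∀ S ⊆ A, #S ≤ attachBound s Δ →
      ∃ lev : V → ℕ, (∀ v ∈ S, lev v = 0) ∧ G.IsLayeringOn A lev (bagBound s Δ) := by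
  induction A using Finset.strongInduction with
  | H A ih =>
  intro S hSA hS
  rcases A.eq_empty_or_nonempty with rfl | ⟨a₀, ha₀⟩
  · exact ⟨0, fun v hv => absurd (hSA hv) (notMem_empty v), isLayeringOn_empty _ _⟩
  obtain ⟨B, hSB, hBA, ha₀B, hB, hattach⟩ := hsep.exists_bag hdeg hSA hS ha₀
  have hK : ∀ K ∈ (A \ B).image (G.compIn (A \ B)), ∃ lev : V → ℕ,
      (∀ y ∈ G.nbhdIn B (A \ B) ∩ K, lev y = 0) ∧ G.IsLayeringOn K lev (bagBound s Δ) := by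
    intro K hK
    obtain ⟨x, -, rfl⟩ := mem_image.1 hK
    exact ih _ (compIn_subset.trans_ssubset (sdiff_ssubset hBA ⟨a₀, ha₀B⟩)) _
      inter_subset_right (hattach x)
  choose! levK h0 hlay using hK
  refine ⟨fun x => if x ∈ B then 0 else levK (G.compIn (A \ B) x) x + 1,
    fun v hv => by simp [hSB hv], IsLayeringOn.glue (fun _ => rfl)
      (fun x hx => h0 _ (mem_image_of_mem _ hx)) (fun x hx => hlay _ (mem_image_of_mem _ hx)) hB⟩

end

section
variable {V : Type*} [Fintype V] {G : SimpleGraph V} {lev : V → ℕ} {w Δ : ℕ}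

def levelBand (lev : V → ℕ) (a b : ℕ) : Finset V := univ.filter fun x => a ≤ lev x ∧ lev x < b

theorem mem_levelBand {a b : ℕ} {x : V} : x ∈ levelBand lev a b ↔ a ≤ lev x ∧ lev x < b := by
  simp [levelBand]

theorem compIn_levelBand_subset (a m : ℕ) (v : V) :
    let Sl := (G.compIn (univ.filter (a ≤ lev ·)) v).filter (lev · = a)
    G.compIn (levelBand lev a (a + m + 1)) v ⊆
      Sl ∪ (insert v (G.nbhdIn Sl univ)).biUnion
        (G.compIn (levelBand lev (a + 1) (a + 1 + m))) := by
  intro Sl x hx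
  have hlow : levelBand lev a (a + m + 1) ⊆ univ.filter (a ≤ lev ·) := fun y hy =>
    mem_filter.2 ⟨mem_univ _, (mem_levelBand.1 hy).1⟩
  have hSl : ∀ y ∈ levelBand lev a (a + m + 1),
      (G.within (levelBand lev a (a + m + 1))).Reachable v y → lev y = a → y ∈ Sl :=
    fun y hy hvy hya =>
    mem_filter.2 ⟨mem_compIn.2 ⟨hlow hy, hvy.mono (within_mono hlow)⟩, hya⟩
  have hup : ∀ y ∈ levelBand lev a (a + m + 1), lev y ≠ a → y ∈ levelBand lev (a + 1) (a + 1 + m) :=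
    fun y hy hya => by rw [mem_levelBand] at hy ⊢; omega
  obtain ⟨hxB, hvx⟩ := mem_compIn.1 hx
  refine hvx.closure_induction (P := fun y => y ∈ levelBand lev a (a + m + 1) → y ∈ Sl ∪ _)
    ?_ ?_ hxB
  · intro hv
    by_cases hva : lev v = a
    · exact mem_union_left _ (hSl v hv .rfl hva)
    · exact mem_union_right _
        (mem_biUnion.2 ⟨v, mem_insert_self _ _, self_mem_compIn (hup v hv hva)⟩)
  · intro y z hvy hy hyz hz
    by_cases hza : lev z = a
    · exact mem_union_left _ (hSl z hz (hvy.trans hyz.reachable) hza)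
    refine mem_union_right _ (mem_biUnion.2 ?_)
    rcases mem_union.1 (hy hyz.2.1) with hySl | hyC
    · exact ⟨z, mem_insert_of_mem (mem_filter.2 ⟨mem_univ _, y, hySl, hyz.1⟩),
        self_mem_compIn (hup z hz hza)⟩
    · obtain ⟨u, hu, huy⟩ := mem_biUnion.1 hyC
      obtain ⟨hyU, hury⟩ := mem_compIn.1 huy
      exact ⟨u, hu, mem_compIn.2 ⟨hup z hz hza,
        hury.trans (Adj.reachable ⟨hyz.1, hyU, hup z hz hza⟩)⟩⟩

theorem IsLayeringOn.card_compIn_levelBand_le (hlay : G.IsLayeringOn univ lev w)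
    (hdeg : ∀ v, G.degree v ≤ Δ) (m : ℕ) :
    ∀ a v, #(G.compIn (levelBand lev a (a + m)) v) ≤ ((Δ + 1) * w + 1) ^ m := by
  induction m with
  | zero =>
    intro a v
    rw [compIn_of_notMem fun h => by rw [mem_levelBand] at h; omega]
    simp
  | succ m ih =>
    intro a v
    set Sl := (G.compIn (univ.filter (a ≤ lev ·)) v).filter (lev · = a)
    have hSl : #Sl ≤ w := hlay.2 a v
    have hE : #(insert v (G.nbhdIn Sl univ)) ≤ Δ * w + 1 :=
      (card_insert_le _ _).trans (Nat.add_le_add_right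
        ((card_nbhdIn_le hdeg _ _).trans (Nat.mul_le_mul_left _ hSl)) _)
    have hpow : 1 ≤ ((Δ + 1) * w + 1) ^ m := Nat.one_le_pow _ _ (by omega)
    calc #(G.compIn (levelBand lev a (a + (m + 1))) v)
        ≤ #Sl + ∑ y ∈ insert v (G.nbhdIn Sl univ),
            #(G.compIn (levelBand lev (a + 1) (a + 1 + m)) y) :=
          (card_le_card (compIn_levelBand_subset a m v)).trans
            ((card_union_le _ _).trans (Nat.add_le_add_left card_biUnion_le _))
      _ ≤ w + (Δ * w + 1) * ((Δ + 1) * w + 1) ^ m := by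
          refine Nat.add_le_add hSl ((sum_le_sum fun y _ => ih (a + 1) y).trans ?_)
          rw [sum_const, smul_eq_mul]
          exact Nat.mul_le_mul_right _ hE
      _ ≤ ((Δ + 1) * w + 1) ^ (m + 1) := by rw [pow_succ]; nlinarith

theorem compIn_subset_compIn_levelBand (hadj : ∀ u v, G.Adj u v → lev u ≤ lev v + 1)
    {S : Finset V} {a b : ℕ} {v : V} (hv : v ∈ levelBand lev a b)
    (hlo : ∀ x ∈ S, lev x + 1 ≠ a) (hhi : ∀ x ∈ S, lev x ≠ b) :
    G.compIn S v ⊆ G.compIn (levelBand lev a b) v := by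
  have hband : ∀ x, (G.within S).Reachable v x → x ∈ levelBand lev a b := fun x hvx =>
    hvx.closure_induction hv fun y z _ hy hyz => by
      have := hadj y z hyz.1
      have := hadj z y hyz.1.symm
      have := hlo z hyz.2.2
      have := hhi z hyz.2.2
      rw [mem_levelBand] at hy ⊢
      omega
  intro x hx
  obtain ⟨-, hvx⟩ := mem_compIn.1 hx
  exact mem_compIn.2 ⟨hband x hvx,
    reachable_within_of_forall_mem hvx fun y _ hvy => hband y hvy⟩

/-- Deleting the levels in one residue class modulo `m + 1` leaves components inside bands of
at most `m` consecutive levels. -/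
theorem IsLayeringOn.card_compIn_le (hlay : G.IsLayeringOn univ lev w)
    (hdeg : ∀ v, G.degree v ≤ Δ) {m i : ℕ} (hi : i ≤ m) (v : V) :
    #(G.compIn (univ.filter (lev · % (m + 1) ≠ i)) v) ≤ ((Δ + 1) * w + 1) ^ m := by
  set S := univ.filter (lev · % (m + 1) ≠ i)
  have hmod : ∀ x ∈ S, ∀ q, lev x ≠ (m + 1) * q + i := fun x hx q hxq =>
    (mem_filter.1 hx).2 (by rw [hxq, Nat.mul_add_mod, Nat.mod_eq_of_lt (by omega)])
  have hadj : ∀ u v, G.Adj u v → lev u ≤ lev v + 1 := fun u v =>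
    hlay.1 u (mem_univ _) v (mem_univ _)
  by_cases hv : v ∈ S
  swap
  · simp [compIn_of_notMem hv]
  by_cases hvi : lev v < i
  · have h := compIn_subset_compIn_levelBand (G := G) (v := v) hadj (a := 0) (b := 0 + i)
      (mem_levelBand.2 ⟨Nat.zero_le _, by omega⟩) (fun x _ => by omega)
      (fun x hx h => hmod x hx 0 (by omega))
    exact (card_le_card h).trans ((hlay.card_compIn_levelBand_le hdeg i 0 v).trans
      (Nat.pow_le_pow_right (by omega) hi))
  obtain ⟨q, r, hr, hrm, hvqr⟩ : ∃ q r, 0 < r ∧ r < m + 1 ∧ lev v = (m + 1) * q + i + r := by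
    refine ⟨(lev v - i) / (m + 1), (lev v - i) % (m + 1), Nat.pos_of_ne_zero fun h => ?_,
      Nat.mod_lt _ (by omega), by have := Nat.div_add_mod (lev v - i) (m + 1); omega⟩
    exact hmod v hv ((lev v - i) / (m + 1)) (by
      have := Nat.div_add_mod (lev v - i) (m + 1); omega)
  have h := compIn_subset_compIn_levelBand (G := G) (v := v) hadj (a := (m + 1) * q + i + 1)
    (b := (m + 1) * q + i + 1 + m) (mem_levelBand.2 ⟨by omega, by omega⟩)
    (fun x hx h => hmod x hx q (by omega))
    (fun x hx h => hmod x hx (q + 1) (by rw [h]; ring))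
  exact (card_le_card h).trans (hlay.card_compIn_levelBand_le hdeg m _ v)

end

end SimpleGraph

namespace FGraph

open SimpleGraph

section
variable {H : FGraph} {ι : Type} [Fintype ι] {T : SimpleGraph ι} {β : ι → Set H.V} {u : ι}

def towards (T : SimpleGraph ι) (β : ι → Set H.V) (W : Finset H.V) (u a : ι) : Finset H.V :=
  W.filter fun x => x ∉ β u ∧ ∃ c, x ∈ β c ∧ (T.within (univ.erase u)).Reachable c a

theorem towards_subset {W : Finset H.V} {a : ι} : towards T β W u a ⊆ W := filter_subset _ _

theorem reachable_of_mem_bags (hconn : ∀ v, (T.induce {c | v ∈ β c}).Connected) {x : H.V}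
    {c c' : ι} (hx : x ∉ β u) (hc : x ∈ β c) (hc' : x ∈ β c') :
    (T.within (univ.erase u)).Reachable c c' := by
  let φ : T.induce {c | x ∈ β c} →g T.within (univ.erase u) :=
    ⟨Subtype.val, fun {p q} hpq => ⟨hpq, mem_erase.2 ⟨fun h => hx (h ▸ p.2), mem_univ _⟩,
      mem_erase.2 ⟨fun h => hx (h ▸ q.2), mem_univ _⟩⟩⟩
  exact ((hconn x).preconnected ⟨c, hc⟩ ⟨c', hc'⟩).map φ

theorem reachable_of_reachable_within (hedge : ∀ v w, H.G.Adj v w → ∃ c, v ∈ β c ∧ w ∈ β c)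
    (hconn : ∀ v, (T.induce {c | v ∈ β c}).Connected) {X : Finset H.V} (hX : ∀ x ∈ X, x ∉ β u)
    {x y : H.V} (hxy : (H.G.within X).Reachable x y) (hxu : x ∉ β u) {c c' : ι}
    (hc : x ∈ β c) (hc' : y ∈ β c') : (T.within (univ.erase u)).Reachable c c' := by
  refine hxy.closure_induction
    (P := fun y => ∀ d, y ∈ β d → (T.within (univ.erase u)).Reachable c d)
    (fun d hd => reachable_of_mem_bags hconn hxu hc hd) (fun x' y' _ hP hadj c' hc' => ?_) c' hc'
  obtain ⟨d, hx'd, hy'd⟩ := hedge x' y' hadj.1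
  exact (hP d hx'd).trans (reachable_of_mem_bags hconn (hX y' hadj.2.2) hy'd hc')

theorem disjoint_towards (hT : T.IsAcyclic) (hconn : ∀ v, (T.induce {c | v ∈ β c}).Connected)
    (W : Finset H.V) {u' : ι} (hadj : T.Adj u u') :
    Disjoint (towards T β W u u') (towards T β W u' u) := by
  refine Finset.disjoint_left.2 fun x hx hx' => ?_
  obtain ⟨-, hxu, c, hc, hcu'⟩ := mem_filter.1 hx
  obtain ⟨-, hxu', c', hc', hc'u⟩ := mem_filter.1 hx'
  refine isBridge_iff.1 (isAcyclic_iff_forall_adj_isBridge.1 hT hadj) ?_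
  have hle := within_erase_le_deleteEdges (T := T) u u'
  have hle' := within_erase_le_deleteEdges (T := T) u' u
  rw [Sym2.eq_swap] at hle'
  exact ((hc'u.mono hle').symm.trans ((reachable_of_mem_bags hconn hxu hc' hc).mono hle)).trans
    (hcu'.mono hle)

theorem exists_adj_lt_card_towards (hT : T.IsTree) (hcov : ∀ v, ∃ c, v ∈ β c)
    (hedge : ∀ v w, H.G.Adj v w → ∃ c, v ∈ β c ∧ w ∈ β c)
    (hconn : ∀ v, (T.induce {c | v ∈ β c}).Connected) {A W : Finset H.V} {v : H.V}
    (hv : #W < 2 * #(W ∩ H.G.compIn (A \ A.filter (· ∈ β u)) v)) :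
    ∃ a, T.Adj u a ∧ #W < 2 * #(towards T β W u a) := by
  set X := A \ A.filter (· ∈ β u)
  have hX : ∀ x ∈ X, x ∉ β u := fun x hx hxu =>
    (mem_sdiff.1 hx).2 (mem_filter.2 ⟨(mem_sdiff.1 hx).1, hxu⟩)
  obtain ⟨x₀, hx₀⟩ : (W ∩ H.G.compIn X v).Nonempty := card_pos.1 (by omega)
  obtain ⟨c₀, hc₀⟩ := hcov x₀
  have hx₀X := compIn_subset (mem_inter.1 hx₀).2
  have hsub : W ∩ H.G.compIn X v ⊆ towards T β W u c₀ := fun y hy => by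
    obtain ⟨hyW, hy⟩ := mem_inter.1 hy
    obtain ⟨c, hc⟩ := hcov y
    have hyx₀ := (mem_compIn.1 hy).2.symm.trans (mem_compIn.1 (mem_inter.1 hx₀).2).2
    exact mem_filter.2 ⟨hyW, hX y (compIn_subset hy), c, hc,
      reachable_of_reachable_within hedge hconn hX hyx₀ (hX y (compIn_subset hy)) hc hc₀⟩
  have hc₀u : u ≠ c₀ := fun h => hX x₀ hx₀X (h ▸ hc₀)
  obtain ⟨p, hp⟩ := (hT.connected.preconnected u c₀).some.toPath
  cases p with
  | nil => exact absurd rfl hc₀u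
  | @cons _ a _ hadj q =>
    refine ⟨a, hadj, hv.trans_le (Nat.mul_le_mul_left _ (card_le_card fun y hy => ?_))⟩
    obtain ⟨hyW, hyu, c, hc, hcc₀⟩ := mem_filter.1 (hsub hy)
    exact mem_filter.2 ⟨hyW, hyu, c, hc,
      hcc₀.trans (reachable_within_erase_of_walk q.reverse (by
        rw [Walk.support_reverse, List.mem_reverse]; exact ((Walk.cons_isPath_iff _ _).1 hp).2))⟩

theorem IsTreeDecomp.hasBalancedSeparators {k : ℕ} (htd : H.IsTreeDecomp T β)
    (hwidth : ∀ c, (β c).ncard ≤ k + 1) : H.G.HasBalancedSeparators (k + 1) := by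
  obtain ⟨hT, hcov, hedge, hconn⟩ := htd
  intro A W
  suffices ∃ u, ∀ v, 2 * #(W ∩ H.G.compIn (A \ A.filter (· ∈ β u)) v) ≤ #W by
    obtain ⟨u, hu⟩ := this
    refine ⟨A.filter (· ∈ β u), filter_subset _ _, ?_, hu⟩
    calc #(A.filter (· ∈ β u)) = (↑(A.filter (· ∈ β u)) : Set H.V).ncard :=
          (Set.ncard_coe_finset _).symm
      _ ≤ (β u).ncard := Set.ncard_le_ncard fun x hx => (mem_filter.1 hx).2
      _ ≤ k + 1 := hwidth u
  by_contra! hheavy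
  choose f hf hfW using fun u =>
    let ⟨_, hv⟩ := hheavy u; exists_adj_lt_card_towards hT hcov hedge hconn hv
  obtain ⟨u, hu⟩ := hT.exists_apply_apply_eq f hf
  have h₁ := hfW u
  have h₂ := hfW (f u)
  rw [hu] at h₂
  have hW : #(towards T β W u (f u) ∪ towards T β W (f u) u) ≤ #W :=
    card_le_card (union_subset towards_subset towards_subset)
  rw [card_union_of_disjoint (disjoint_towards hT.isAcyclic hconn W (hf u))] at hW
  omega

end

theorem degree_le_of_maxDegLE {H : FGraph} {Δ : ℕ} (h : H.maxDegLE Δ) (v : H.V) :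
    H.G.degree v ≤ Δ := by
  rw [← card_neighborFinset_eq_degree, neighborFinset, ← Set.ncard_eq_toFinset_card']
  exact h v

theorem maxDegLE.del {G : FGraph} {Δ : ℕ} (h : G.maxDegLE Δ) (X : Set G.V) :
    (G.del X).maxDegLE Δ := fun v =>
  calc ((G.del X).G.neighborSet v).ncard
      = (Subtype.val '' (G.del X).G.neighborSet v).ncard :=
        (Set.ncard_image_of_injective _ Subtype.val_injective).symm
    _ ≤ (G.G.neighborSet v.1).ncard := Set.ncard_le_ncard (by
        rintro _ ⟨y, hy, rfl⟩
        exact hy) (Set.toFinite _)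
    _ ≤ Δ := h v.1

theorem compSize_del_le (H : FGraph) (Y : Finset H.V) (w : (H.del ↑Y).V) :
    (H.del ↑Y).compSize w ≤ #(H.G.compIn (univ.filter (· ∉ Y)) w.1) := by
  let φ : (H.del ↑Y).G →g H.G.within (univ.filter (· ∉ Y)) :=
    ⟨Subtype.val, fun {u v} huv => ⟨huv, mem_filter.2 ⟨mem_univ _, u.2⟩,
      mem_filter.2 ⟨mem_univ _, v.2⟩⟩⟩
  calc (H.del ↑Y).compSize w
      = (Subtype.val '' ((H.del ↑Y).G.connectedComponentMk w).supp).ncard :=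
        (Set.ncard_image_of_injective _ Subtype.val_injective).symm
    _ ≤ (↑(H.G.compIn (univ.filter (· ∉ Y)) w.1) : Set H.V).ncard := by
        refine Set.ncard_le_ncard ?_ (Set.toFinite _)
        rintro _ ⟨u, hu, rfl⟩
        exact mem_compIn.2 ⟨mem_filter.2 ⟨mem_univ _, u.2⟩,
          (ConnectedComponent.eq.1 hu).symm.map φ⟩
    _ = _ := Set.ncard_coe_finset _

theorem compSize_iso {H H' : FGraph} (e : H.G ≃g H'.G) (v : H.V) :
    H'.compSize (e v) = H.compSize v := by
  have hC : e.connectedComponentEquiv (H.G.connectedComponentMk v) =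
      H'.G.connectedComponentMk (e v) := ConnectedComponent.map_mk _ _
  unfold compSize
  rw [← hC, ← Nat.card_coe_set_eq, ← Nat.card_coe_set_eq]
  exact Nat.card_congr (ConnectedComponent.isoEquivSupp e _).symm

def delDelIso (G : FGraph) (X : Set G.V) (Y : Set (G.del X).V) :
    ((G.del X).del Y).G ≃g (G.del (X ∪ Subtype.val '' Y)).G where
  toFun v := ⟨v.1.1, fun h => h.elim v.1.2 fun ⟨_, hy, hyv⟩ => v.2 (Subtype.ext hyv ▸ hy)⟩
  invFun v := ⟨⟨v.1, fun h => v.2 (.inl h)⟩, fun h => v.2 (.inr ⟨_, h, rfl⟩)⟩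
  left_inv _ := rfl
  right_inv _ := rfl
  map_rel_iff' := Iff.rfl

def IsoInvariant (C : Set FGraph) : Prop :=
  ∀ ⦃H H' : FGraph⦄, H.G ≃g H'.G → H ∈ C → H' ∈ C

def compSizeLE (t : ℕ) : Set FGraph := {H | ∀ v, H.compSize v ≤ t}

theorem isoInvariant_compSizeLE (t : ℕ) : IsoInvariant (compSizeLE t) := fun H _ e hH v => by
  simpa [compSize_iso] using hH (e.symm v)

/-- The packing puts on `X` the total weight of the indices `i` with `D i = X`. -/
theorem fracPack_of_weights {G : FGraph} {C : Set FGraph} {ε : ℝ} {ι : Type*} [Fintype ι]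
    (p : ι → ℝ) (D : ι → Finset G.V) (hp : ∀ i, 0 ≤ p i) (hsum : ∑ i, p i = 1)
    (hC : ∀ i, p i ≠ 0 → G.del ↑(D i) ∈ C) (hthick : ∀ v, ∑ i with v ∈ D i, p i ≤ ε) :
    G.FracPack C ε := by
  refine ⟨fun X => ∑ i with D i = X, p i, fun X => sum_nonneg fun i _ => hp i,
    by rw [sum_fiberwise]; exact hsum, fun X hX => ?_, fun v => ?_⟩
  · obtain ⟨i, hi, hpi⟩ := exists_ne_zero_of_sum_ne_zero hX
    exact (mem_filter.1 hi).2 ▸ hC i hpi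
  · refine le_of_eq_of_le ?_ (hthick v)
    rw [← sum_fiberwise_of_maps_to (t := univ.filter (v ∈ ·)) (g := D)
      fun i hi => mem_filter.2 ⟨mem_univ _, (mem_filter.1 hi).2⟩]
    refine sum_congr rfl fun X hX => sum_congr ?_ fun _ _ => rfl
    ext i
    simp only [mem_filter, mem_univ, true_and]
    exact ⟨fun h => ⟨h ▸ (mem_filter.1 hX).2, h⟩, And.right⟩

theorem FracPack.mono {G : FGraph} {C : Set FGraph} {ε ε' : ℝ} (h : G.FracPack C ε)
    (hε : ε ≤ ε') : G.FracPack C ε' :=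
  let ⟨π, h₁, h₂, h₃, h₄⟩ := h
  ⟨π, h₁, h₂, h₃, fun v => (h₄ v).trans hε⟩

theorem fracPack_of_coloring {H : FGraph} {C : Set FGraph} {m : ℕ} (f : H.V → Fin (m + 1))
    (hC : ∀ i, H.del ↑(univ.filter (f · = i)) ∈ C) : H.FracPack C (1 / (m + 1)) := by
  refine fracPack_of_weights (fun _ => 1 / (m + 1)) (fun i => univ.filter (f · = i))
    (fun _ => by positivity) (by simp; field_simp) (fun i _ => hC i) fun v => ?_
  have : #(univ.filter (f v = ·)) = 1 := card_eq_one.2 ⟨f v, by ext; simp [eq_comm]⟩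
  simp [this]

theorem fracPack_compSizeLE {H : FGraph} {k Δ : ℕ} (htw : H.twLE k) (hdeg : H.maxDegLE Δ)
    (m : ℕ) :
    H.FracPack (compSizeLE (((Δ + 1) * bagBound (k + 1) Δ + 1) ^ m)) (1 / (m + 1)) := by
  obtain ⟨ι, _, T, β, htd, hwidth⟩ := htw
  obtain ⟨lev, -, hlay⟩ := (htd.hasBalancedSeparators hwidth).exists_isLayeringOn
    (degree_le_of_maxDegLE hdeg) univ ∅ (empty_subset _) (by simp [attachBound])
  let f : H.V → Fin (m + 1) := fun x => ⟨lev x % (m + 1), Nat.mod_lt _ m.succ_pos⟩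
  refine fracPack_of_coloring f fun i w => (compSize_del_le H _ w).trans ?_
  have : univ.filter (· ∉ univ.filter (f · = i)) = univ.filter (lev · % (m + 1) ≠ i) := by
    ext; simp [f, Fin.ext_iff]
  rw [this]
  exact hlay.card_compIn_le (degree_le_of_maxDegLE hdeg) i.is_le w.1

/-- Where `h` provides no packing, the weight `1` on `∅` stands in; it only ever gets
multiplied by a zero weight. -/
theorem exists_weights_of_imp_fracPack {H : FGraph} {C : Set FGraph} {ε : ℝ} {P : Prop}
    (hε : 0 ≤ ε) (h : P → H.FracPack C ε) :
    ∃ π : Finset H.V → ℝ, (∀ Y, 0 ≤ π Y) ∧ ∑ Y, π Y = 1 ∧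
      (P → ∀ Y, π Y ≠ 0 → H.del ↑Y ∈ C) ∧ ∀ v, ∑ Y with v ∈ Y, π Y ≤ ε := by
  by_cases hP : P
  · obtain ⟨π, h₁, h₂, h₃, h₄⟩ := h hP
    exact ⟨π, h₁, h₂, fun _ => h₃, h₄⟩
  · refine ⟨fun Y => if Y = ∅ then 1 else 0, fun Y => by positivity, by simp,
      fun h => absurd h hP, fun v => ?_⟩
    rw [sum_eq_zero fun Y hY => if_neg (ne_empty_of_mem (mem_filter.1 hY).2)]
    exact hε

theorem FracPack.trans {G : FGraph} {C₀ C : Set FGraph} {ε₀ ε : ℝ} (hC : IsoInvariant C)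
    (hε : 0 ≤ ε) (h₀ : G.FracPack C₀ ε₀)
    (h : ∀ X : Finset G.V, G.del ↑X ∈ C₀ → (G.del ↑X).FracPack C ε) :
    G.FracPack C (ε₀ + ε) := by
  obtain ⟨π₀, hπ₀, hsum₀, hC₀, hthick₀⟩ := h₀
  choose π hπ hsum hC' hthick using fun X => exists_weights_of_imp_fracPack hε (h X)
  let D : (Σ X : Finset G.V, Finset (G.del ↑X).V) → Finset G.V :=
    fun XY => XY.1 ∪ XY.2.map (Function.Embedding.subtype _)
  refine fracPack_of_weights (fun XY => π₀ XY.1 * π XY.1 XY.2) D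
    (fun XY => mul_nonneg (hπ₀ _) (hπ _ _)) ?_ ?_ fun v => ?_
  · rw [Fintype.sum_sigma]
    simp_rw [← mul_sum, hsum, mul_one]
    exact hsum₀
  · rintro ⟨X, Y⟩ hXY
    have hX : G.del ↑X ∈ C₀ := hC₀ X (left_ne_zero_of_mul hXY)
    have := hC (delDelIso G ↑X ↑Y) (hC' X hX Y (right_ne_zero_of_mul hXY))
    convert this using 2
    exact (Finset.coe_union _ _).trans (congrArg ((X : Set G.V) ∪ ·) (Finset.coe_map _ _))
  have hinner : ∀ X, ∑ Y with v ∈ D ⟨X, Y⟩, π X Y ≤ if v ∈ X then 1 else ε := by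
    intro X
    split_ifs with hv
    · exact (sum_le_sum_of_subset_of_nonneg (filter_subset _ _) fun _ _ _ => hπ _ _).trans
        (hsum X).le
    · refine le_of_eq_of_le (sum_congr ?_ fun _ _ => rfl) (hthick X ⟨v, hv⟩)
      ext Y
      simp only [mem_filter, mem_univ, true_and, D, Finset.mem_union, hv, false_or]
      refine ⟨fun h => ?_, fun h => Finset.mem_map.2 ⟨_, h, rfl⟩⟩
      obtain ⟨y, hy, hyv⟩ := Finset.mem_map.1 h
      exact (Subtype.ext hyv : y = ⟨v, hv⟩) ▸ hy
  calc ∑ XY with v ∈ D XY, π₀ XY.1 * π XY.1 XY.2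
      = ∑ X, π₀ X * ∑ Y with v ∈ D ⟨X, Y⟩, π X Y := by
        rw [sum_filter, Fintype.sum_sigma]
        refine sum_congr rfl fun X _ => ?_
        rw [sum_filter, mul_sum]
        exact sum_congr rfl fun Y _ => by split_ifs <;> simp
    _ ≤ ∑ X, π₀ X * (if v ∈ X then 1 else ε) :=
        sum_le_sum fun X _ => mul_le_mul_of_nonneg_left (hinner X) (hπ₀ X)
    _ ≤ ∑ X, ((if v ∈ X then π₀ X else 0) + ε * π₀ X) :=
        sum_le_sum fun X _ => by split_ifs <;> nlinarith [hπ₀ X]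
    _ = ∑ X with v ∈ X, π₀ X + ε := by
        rw [sum_add_distrib, ← sum_filter, ← mul_sum, hsum₀, mul_one]
    _ ≤ ε₀ + ε := by linarith [hthick₀ v]

end FGraph

/-- **Corollary 19.** Every fractionally `Tw`-fragile class with bounded maximum degree is
fractionally `Vs`-fragile. -/
theorem stmt11 (Gc : Set FGraph) (hfrag : FGraph.FracFragile FGraph.Tw Gc)
    (hdeg : FGraph.BddMaxDeg Gc) :
    FGraph.FracFragile FGraph.Vs Gc := by
  obtain ⟨Δ, hΔ⟩ := hdeg
  intro ε hε
  obtain ⟨C₀, ⟨k, hk⟩, hC₀⟩ := hfrag (ε / 2) (half_pos hε)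
  obtain ⟨m, hm⟩ := exists_nat_one_div_lt (half_pos hε)
  set t := ((Δ + 1) * SimpleGraph.bagBound (k + 1) Δ + 1) ^ m
  refine ⟨FGraph.compSizeLE t, ⟨t, fun _ hH => hH⟩, fun G hG => ?_⟩
  refine ((hC₀ G hG).trans (FGraph.isoInvariant_compSizeLE t) (by positivity)
    fun X hX => FGraph.fracPack_compSizeLE (hk _ hX) ((hΔ G hG).del _) m).mono ?_
  linarith
end
end

section
/- If H' is a d₁-minor of a graph G and H is a d₂-minor of H', then H is a (d₁ + d₂(2d₁+1))-minor of G. -/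
open Classical Filter

attribute [local instance] Classical.propDecidable

noncomputable section

lemma roundtrip_aux {V : Type} {G : SimpleGraph V} {S : Set V} {d : ℕ}
    (hc : ∃ v ∈ S, ∀ u ∈ S, ∃ p : G.Walk v u, p.length ≤ d ∧ ∀ x ∈ p.support, x ∈ S)
    {a b : V} (ha : a ∈ S) (hb : b ∈ S) :
    ∃ p : G.Walk a b, p.length ≤ 2 * d ∧ ∀ x ∈ p.support, x ∈ S := by
  obtain ⟨v, hv, h⟩ := hc
  obtain ⟨p₁, hl₁, hs₁⟩ := h a ha
  obtain ⟨p₂, hl₂, hs₂⟩ := h b hb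
  refine ⟨p₁.reverse.append p₂, ?_, ?_⟩
  · simp only [SimpleGraph.Walk.length_append, SimpleGraph.Walk.length_reverse]
    omega
  · intro x hx
    rw [SimpleGraph.Walk.mem_support_append_iff] at hx
    rcases hx with hx | hx
    · exact hs₁ x (by simpa using hx)
    · exact hs₂ x hx

lemma chain_aux {VG VH : Type} {G : SimpleGraph VG} {Gh : SimpleGraph VH}
    (B : VH → Set VG) (d : ℕ)
    (hcent : ∀ w, ∃ v ∈ B w, ∀ u ∈ B w, ∃ p : G.Walk v u,
      p.length ≤ d ∧ ∀ x ∈ p.support, x ∈ B w)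
    (hadj : ∀ w w', Gh.Adj w w' → ∃ v ∈ B w, ∃ v' ∈ B w', G.Adj v v') :
    ∀ {x y : VH} (p : Gh.Walk x y), ∀ a ∈ B x, ∀ u ∈ B y,
      ∃ q : G.Walk a u, q.length ≤ 2 * d + p.length * (2 * d + 1) ∧
        ∀ z ∈ q.support, ∃ w ∈ p.support, z ∈ B w := by
  intro x y p
  induction p with
  | nil =>
    intro a ha u hu
    obtain ⟨q, hl, hs⟩ := roundtrip_aux (hcent _) ha hu
    exact ⟨q, by simpa using hl, fun z hz => ⟨_, by simp, hs z hz⟩⟩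
  | @cons x v y h p ih =>
    intro a ha u hu
    obtain ⟨s, hs, t, ht, hst⟩ := hadj x v h
    obtain ⟨q₁, hl₁, hsup₁⟩ := roundtrip_aux (hcent x) ha hs
    obtain ⟨q₂, hl₂, hsup₂⟩ := ih t ht u hu
    refine ⟨q₁.append (SimpleGraph.Walk.cons hst q₂), ?_, ?_⟩
    · simp only [SimpleGraph.Walk.length_append, SimpleGraph.Walk.length_cons]
      have hexp : (p.length + 1) * (2 * d + 1) = p.length * (2 * d + 1) + (2 * d + 1) := by ring
      omega
    · intro z hz
      rw [SimpleGraph.Walk.mem_support_append_iff] at hz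
      rcases hz with hz | hz
      · exact ⟨x, by simp, hsup₁ z hz⟩
      · rw [SimpleGraph.Walk.support_cons] at hz
        rcases List.mem_cons.mp hz with rfl | hz
        · exact ⟨x, by simp, hs⟩
        · obtain ⟨w, hw, hzw⟩ := hsup₂ z hz
          exact ⟨w, by simp [hw], hzw⟩

lemma chainTop_aux {VG VH : Type} {G : SimpleGraph VG} {Gh : SimpleGraph VH}
    (B : VH → Set VG) (d : ℕ)
    (hcent : ∀ w, ∃ v ∈ B w, ∀ u ∈ B w, ∃ p : G.Walk v u,
      p.length ≤ d ∧ ∀ x ∈ p.support, x ∈ B w)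
    (hadj : ∀ w w', Gh.Adj w w' → ∃ v ∈ B w, ∃ v' ∈ B w', G.Adj v v')
    {x : VH} {c : VG}
    (hc : ∀ u ∈ B x, ∃ p : G.Walk c u, p.length ≤ d ∧ ∀ z ∈ p.support, z ∈ B x) :
    ∀ {y : VH} (p : Gh.Walk x y), ∀ u ∈ B y,
      ∃ q : G.Walk c u, q.length ≤ d + p.length * (2 * d + 1) ∧
        ∀ z ∈ q.support, ∃ w ∈ p.support, z ∈ B w := by
  intro y p u hu
  cases p with
  | nil =>
    obtain ⟨q, hl, hs⟩ := hc u hu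
    exact ⟨q, by simpa using (le_trans hl (by omega)), fun z hz => ⟨x, by simp, hs z hz⟩⟩
  | @cons x v y h p =>
    obtain ⟨s, hs, t, ht, hst⟩ := hadj x v h
    obtain ⟨q₁, hl₁, hsup₁⟩ := hc s hs
    obtain ⟨q₂, hl₂, hsup₂⟩ := chain_aux B d hcent hadj p t ht u hu
    refine ⟨q₁.append (SimpleGraph.Walk.cons hst q₂), ?_, ?_⟩
    · simp only [SimpleGraph.Walk.length_append, SimpleGraph.Walk.length_cons]
      have hexp : (p.length + 1) * (2 * d + 1) = p.length * (2 * d + 1) + (2 * d + 1) := by ring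
      omega
    · intro z hz
      rw [SimpleGraph.Walk.mem_support_append_iff] at hz
      rcases hz with hz | hz
      · exact ⟨x, by simp, hsup₁ z hz⟩
      · rw [SimpleGraph.Walk.support_cons] at hz
        rcases List.mem_cons.mp hz with rfl | hz
        · exact ⟨x, by simp, hs⟩
        · obtain ⟨w, hw, hzw⟩ := hsup₂ z hz
          exact ⟨w, by simp [hw], hzw⟩

/-- **Observation 20.** If `H'` is a `d₁`-minor of `G` and `H` is a `d₂`-minor of `H'`,
then `H` is a `(d₁ + d₂(2d₁+1))`-minor of `G`. -/
theorem stmt12 (d₁ d₂ : ℕ) (G H' H : FGraph) (h1 : FGraph.IsMinor d₁ H' G)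
    (h2 : FGraph.IsMinor d₂ H H') :
    FGraph.IsMinor (d₁ + d₂ * (2 * d₁ + 1)) H G := by
  obtain ⟨B₁, hne₁, hdis₁, hcent₁, hadj₁⟩ := h1
  obtain ⟨B₂, hne₂, hdis₂, hcent₂, hadj₂⟩ := h2
  refine ⟨fun w => {v | ∃ w' ∈ B₂ w, v ∈ B₁ w'}, ?_, ?_, ?_, ?_⟩
  · intro w
    obtain ⟨w', hw'⟩ := hne₂ w
    obtain ⟨v, hv⟩ := hne₁ w'
    exact ⟨v, w', hw', hv⟩
  · intro w w' hne
    rw [Set.disjoint_left]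
    rintro v ⟨a, ha, hva⟩ ⟨b, hb, hvb⟩
    have hab : a ≠ b := by
      rintro rfl
      exact (Set.disjoint_left.mp (hdis₂ hne) ha) hb
    exact (Set.disjoint_left.mp (hdis₁ hab) hva) hvb
  · intro w
    obtain ⟨v', hv'mem, hv'walks⟩ := hcent₂ w
    obtain ⟨c, hcmem, hcwalks⟩ := hcent₁ v'
    refine ⟨c, ⟨v', hv'mem, hcmem⟩, ?_⟩
    rintro u ⟨w'', hw''mem, huB⟩
    obtain ⟨p, hpl, hps⟩ := hv'walks w'' hw''mem
    obtain ⟨q, hql, hqs⟩ := chainTop_aux B₁ d₁ hcent₁ hadj₁ hcwalks p u huB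
    refine ⟨q, ?_, ?_⟩
    · calc q.length ≤ d₁ + p.length * (2 * d₁ + 1) := hql
        _ ≤ d₁ + d₂ * (2 * d₁ + 1) := by
            have := Nat.mul_le_mul_right (2 * d₁ + 1) hpl
            omega
    · intro z hz
      obtain ⟨w₀, hw₀, hzw₀⟩ := hqs z hz
      exact ⟨w₀, hps w₀ hw₀, hzw₀⟩
  · intro w w' hadj
    obtain ⟨w₁, hw₁, w₂, hw₂, h12⟩ := hadj₂ w w' hadj
    obtain ⟨v, hv, v', hv', hvv'⟩ := hadj₁ w₁ w₂ h12
    exact ⟨v, ⟨w₁, hw₁, hv⟩, v', ⟨w₂, hw₂, hv'⟩, hvv'⟩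
end
end

section
/- Let α > 0 be a real number and n, m ≥ 1 integers. Let G be a 3-regular α-expander on n vertices and let G' be obtained from G by subdividing each edge at most m times, with n' = |V(G')|. Then every balanced separation of G' has size at least n' / (3·(1 + 3m/2)·(6/α + 2)). -/
open Classical Filter

attribute [local instance] Classical.propDecidable

noncomputable section

/-- The number of edges of `G` with exactly one end in `S`. -/
def edgeBoundaryCount (G : FGraph) (S : Set G.V) : ℕ :=
  ({e : Sym2 G.V | ∃ u v : G.V, G.G.Adj u v ∧ u ∈ S ∧ v ∉ S ∧ e = s(u, v)}).ncard

/-- `G` is an `α`-expander: every `S ⊆ V(G)` with `|S| ≤ |V(G)|/2` is incident to at least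
`α·|S|` edges leaving `S`. -/
def IsExpander (G : FGraph) (α : ℝ) : Prop :=
  ∀ S : Set G.V, 2 * S.ncard ≤ G.card →
    α * (S.ncard : ℝ) ≤ (edgeBoundaryCount G S : ℝ)

/-- `G'` is obtained from `G` by subdividing each edge at most `m` times: branch vertices
are given by the injection `f` and each edge `uv` of `G` is replaced by a path `P u v h`
from `f u` to `f v` of length at most `m + 1`; the paths are internally disjoint, and
together they cover all vertices and edges of `G'`. -/
def IsSubdivAtMost (m : ℕ) (G' G : FGraph) : Prop :=
  ∃ f : G.V → G'.V, Function.Injective f ∧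
    ∃ P : ∀ u v : G.V, G.G.Adj u v → G'.G.Walk (f u) (f v),
      (∀ u v (h : G.G.Adj u v), (P u v h).IsPath) ∧
      (∀ u v (h : G.G.Adj u v), (P u v h).length ≤ m + 1) ∧
      (∀ u v (h : G.G.Adj u v), P v u h.symm = (P u v h).reverse) ∧
      (∀ u v (h : G.G.Adj u v), ∀ x ∈ (P u v h).support,
        x ∈ Set.range f → x = f u ∨ x = f v) ∧
      (∀ u v (h : G.G.Adj u v), ∀ u' v' (h' : G.G.Adj u' v'), s(u, v) ≠ s(u', v') →
        ∀ x, x ∈ (P u v h).support → x ∈ (P u' v' h').support → x ∈ Set.range f) ∧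
      (∀ x : G'.V, x ∈ Set.range f ∨ ∃ u v, ∃ h : G.G.Adj u v, x ∈ (P u v h).support) ∧
      (∀ e ∈ G'.G.edgeSet, ∃ u v, ∃ h : G.G.Adj u v, e ∈ (P u v h).edges)

private lemma card_le_mul_of_fibers {β γ : Type*} [DecidableEq γ] (s : Finset β) (t : Finset γ) (g : β → γ) (k : ℕ)
    (hmem : ∀ b ∈ s, g b ∈ t)
    (hfib : ∀ c ∈ t, (s.filter fun b => g b = c).card ≤ k) :
    s.card ≤ k * t.card := by
  calc s.card = ∑ c ∈ t, (s.filter fun b => g b = c).card :=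
        Finset.card_eq_sum_card_fiberwise hmem
    _ ≤ ∑ _c ∈ t, k := Finset.sum_le_sum hfib
    _ = k * t.card := by rw [Finset.sum_const, smul_eq_mul, mul_comm]

private lemma walk_cross {V : Type} {G : SimpleGraph V} {A B : G.Subgraph}
    (hAB : A ⊔ B = ⊤) : ∀ {a b : V} (p : G.Walk a b),
    a ∈ A.verts → b ∉ A.verts → ∃ x ∈ p.support, x ∈ A.verts ∧ x ∈ B.verts := by
  intro a b p
  induction p with
  | nil => intro ha hb; exact absurd ha hb
  | @cons a c b h p ih =>
    intro ha hb
    by_cases haB : a ∈ B.verts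
    · exact ⟨a, SimpleGraph.Walk.start_mem_support _, ha, haB⟩
    · have hedge : s(a, c) ∈ A.edgeSet ∪ B.edgeSet := by
        rw [← SimpleGraph.Subgraph.edgeSet_sup, hAB, SimpleGraph.Subgraph.edgeSet_top]
        exact h
      have hcA : c ∈ A.verts := by
        rcases hedge with he | he
        · exact (SimpleGraph.Subgraph.mem_edgeSet.1 he).snd_mem
        · exact absurd (SimpleGraph.Subgraph.mem_edgeSet.1 he).fst_mem haB
      obtain ⟨x, hx, hxA, hxB⟩ := ih hcA hb
      exact ⟨x, by simp [SimpleGraph.Walk.support_cons, hx], hxA, hxB⟩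

private lemma charge_lemma {VG VG' : Type} [Fintype VG] [Fintype VG']
    {GG : SimpleGraph VG} {GG' : SimpleGraph VG'}
    (hreg : ∀ v : VG, (GG.neighborSet v).ncard = 3)
    (f : VG → VG') (hf : Function.Injective f)
    (P : ∀ u v : VG, GG.Adj u v → GG'.Walk (f u) (f v))
    (hP5 : ∀ u v (h : GG.Adj u v), ∀ u' v' (h' : GG.Adj u' v'), s(u,v) ≠ s(u',v') →
      ∀ x, x ∈ (P u v h).support → x ∈ (P u' v' h').support → x ∈ Set.range f)
    (X : Set VG') (E : Finset (Sym2 VG)) (g : Sym2 VG → VG')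
    (hg : ∀ e ∈ E, g e ∈ X ∧
      ((∃ u w, GG.Adj u w ∧ g e = f w ∧ e = s(u,w)) ∨
       (g e ∉ Set.range f ∧ ∃ u v, ∃ h : GG.Adj u v, e = s(u,v) ∧ g e ∈ (P u v h).support))) :
    E.card ≤ 3 * X.ncard := by
  rw [Set.ncard_eq_toFinset_card' X]
  have hmem : ∀ e ∈ E, g e ∈ X.toFinset := fun e he => Set.mem_toFinset.2 (hg e he).1
  calc E.card = ∑ c ∈ X.toFinset, (E.filter fun e => g e = c).card :=
        Finset.card_eq_sum_card_fiberwise hmem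
    _ ≤ ∑ _c ∈ X.toFinset, 3 := by
        apply Finset.sum_le_sum
        intro c _
        by_cases hc : c ∈ Set.range f
        · obtain ⟨w, rfl⟩ := hc
          have hsub : (E.filter fun e => g e = f w) ⊆
              (GG.neighborSet w).toFinset.image (fun u => s(u, w)) := by
            intro e he
            rw [Finset.mem_filter] at he
            obtain ⟨heE, hge⟩ := he
            rcases (hg e heE).2 with ⟨u, w', hadj, hgw', hew'⟩ | ⟨hnr, _⟩
            · have hww' : w' = w := hf (by rw [← hgw', hge])
              subst hww'
              refine Finset.mem_image.2 ⟨u, Set.mem_toFinset.2 hadj.symm, hew'.symm⟩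
            · exact absurd ⟨w, hge.symm⟩ hnr
          calc (E.filter fun e => g e = f w).card
              ≤ ((GG.neighborSet w).toFinset.image (fun u => s(u, w))).card :=
                Finset.card_le_card hsub
            _ ≤ (GG.neighborSet w).toFinset.card := Finset.card_image_le
            _ = 3 := by rw [← Set.ncard_eq_toFinset_card']; exact hreg w
        · have : (E.filter fun e => g e = c).card ≤ 1 := by
            rw [Finset.card_le_one]
            intro e he e' he'
            rw [Finset.mem_filter] at he he'
            obtain ⟨heE, hge⟩ := he
            obtain ⟨heE', hge'⟩ := he'
            rcases (hg e heE).2 with ⟨u, w, _, hgw, _⟩ | ⟨_, u, v, h, hesy, hsup⟩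
            · exact absurd ⟨w, (hge ▸ hgw).symm⟩ hc
            · rcases (hg e' heE').2 with ⟨u', w', _, hgw', _⟩ | ⟨_, u', v', h', hesy', hsup'⟩
              · exact absurd ⟨w', (hge' ▸ hgw').symm⟩ hc
              · by_contra hne
                refine hc ?_
                have hneq : s(u,v) ≠ s(u',v') := by
                  intro hq; exact hne (hesy.trans (hq.trans hesy'.symm))
                have := hP5 u v h u' v' h' hneq c (hge ▸ hsup) (hge' ▸ hsup')
                exact this
          omega
    _ = 3 * X.toFinset.card := by rw [Finset.sum_const, smul_eq_mul, mul_comm]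

private lemma internal_count {VG VG' : Type} [DecidableEq VG'] {GG' : SimpleGraph VG'}
    {f : VG → VG'} [DecidablePred fun y : VG' => y ∉ Set.range f]
    (hf : Function.Injective f) {u v : VG} (hne : u ≠ v) {m : ℕ}
    (p : GG'.Walk (f u) (f v)) (hp : p.IsPath) (hl : p.length ≤ m + 1) :
    (p.support.toFinset.filter (fun y => y ∉ Set.range f)).card ≤ m := by
  have hfne : f u ≠ f v := fun h => hne (hf h)
  have hsubs : (p.support.toFinset.filter (fun y => y ∉ Set.range f)) ⊆
      p.support.toFinset \ {f u, f v} := by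
    intro y hy
    rw [Finset.mem_filter] at hy
    refine Finset.mem_sdiff.2 ⟨hy.1, ?_⟩
    intro hmem
    rcases Finset.mem_insert.1 hmem with h | h
    · exact hy.2 ⟨u, h.symm⟩
    · exact hy.2 ⟨v, (Finset.mem_singleton.1 h).symm⟩
  have hpair : ({f u, f v} : Finset VG') ⊆ p.support.toFinset := by
    intro y hy
    rcases Finset.mem_insert.1 hy with h | h
    · subst h; exact List.mem_toFinset.2 p.start_mem_support
    · rw [Finset.mem_singleton] at h; subst h
      exact List.mem_toFinset.2 p.end_mem_support
  have hcard2 : ({f u, f v} : Finset VG').card = 2 := Finset.card_pair hfne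
  have hT : p.support.toFinset.card = p.length + 1 := by
    rw [List.toFinset_card_of_nodup hp.support_nodup, SimpleGraph.Walk.length_support]
  have := Finset.card_le_card hsubs
  rw [Finset.card_sdiff_of_subset hpair, hcard2, hT] at this
  omega

private lemma aux28 (α : ℝ) (n m : ℕ) (hα : 0 < α) (hn : 1 ≤ n)
    (G G' : FGraph) (hcard : G.card = n)
    (hreg : ∀ v : G.V, (G.G.neighborSet v).ncard = 3)
    (hexp : IsExpander G α)
    (f : G.V → G'.V) (hf : Function.Injective f)
    (P : ∀ u v : G.V, G.G.Adj u v → G'.G.Walk (f u) (f v))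
    (hP1 : ∀ u v (h : G.G.Adj u v), (P u v h).IsPath)
    (hP2 : ∀ u v (h : G.G.Adj u v), (P u v h).length ≤ m + 1)
    (hP3 : ∀ u v (h : G.G.Adj u v), P v u h.symm = (P u v h).reverse)
    (hP4 : ∀ u v (h : G.G.Adj u v), ∀ x ∈ (P u v h).support,
      x ∈ Set.range f → x = f u ∨ x = f v)
    (hP5 : ∀ u v (h : G.G.Adj u v), ∀ u' v' (h' : G.G.Adj u' v'), s(u, v) ≠ s(u', v') →
      ∀ x, x ∈ (P u v h).support → x ∈ (P u' v' h').support → x ∈ Set.range f)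
    (hP6 : ∀ x : G'.V, x ∈ Set.range f ∨ ∃ u v, ∃ h : G.G.Adj u v, x ∈ (P u v h).support)
    (A B : G'.G.Subgraph) (hAB : A ⊔ B = ⊤)
    (hbalA : 3 * (A.verts \ B.verts).ncard ≤ 2 * G'.card)
    (hWBsmall : 2 * {w : G.V | f w ∈ B.verts \ A.verts}.ncard ≤ n) :
    (G'.card : ℝ) / (3 * (1 + 3 * (m : ℝ) / 2) * (6 / α + 2))
      ≤ ((A.verts ∩ B.verts).ncard : ℝ) := by
  classical
  have hGne : Nonempty G.V := by
    rw [← Fintype.card_pos_iff, show Fintype.card G.V = G.card from rfl, hcard]; omega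
  set X : Set G'.V := A.verts ∩ B.verts with hXdef
  set WA : Set G.V := {w : G.V | f w ∈ A.verts \ B.verts} with hWAdef
  set WB : Set G.V := {w : G.V | f w ∈ B.verts \ A.verts} with hWBdef
  set WX : Set G.V := {w : G.V | f w ∈ X} with hWXdef
  have hvert : ∀ x : G'.V, x ∈ A.verts ∨ x ∈ B.verts := by
    intro x
    have hx : x ∈ (A ⊔ B).verts := by rw [hAB]; exact Set.mem_univ x
    rwa [SimpleGraph.Subgraph.verts_sup] at hx
  have hpart : ∀ w : G.V, w ∈ WA ∨ w ∈ WB ∨ w ∈ WX := by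
    intro w
    rcases hvert (f w) with h | h
    · by_cases hb : f w ∈ B.verts
      · exact Or.inr (Or.inr ⟨h, hb⟩)
      · exact Or.inl ⟨h, hb⟩
    · by_cases ha : f w ∈ A.verts
      · exact Or.inr (Or.inr ⟨ha, h⟩)
      · exact Or.inr (Or.inl ⟨h, ha⟩)
  -- Step 1: expander bound  α |WB| ≤ 3 |X|
  have hexpWB : α * (WB.ncard : ℝ) ≤ 3 * (X.ncard : ℝ) := by
    set E0S : Set (Sym2 G.V) :=
      {e : Sym2 G.V | ∃ u v, G.G.Adj u v ∧ u ∈ WB ∧ v ∉ WB ∧ e = s(u, v)} with hE0def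
    have claim0 : ∀ e : Sym2 G.V, ∃ c : G'.V, e ∈ E0S.toFinset → c ∈ X ∧
        ((∃ u w, G.G.Adj u w ∧ c = f w ∧ e = s(u, w)) ∨
         (c ∉ Set.range f ∧ ∃ u v, ∃ h : G.G.Adj u v, e = s(u, v) ∧ c ∈ (P u v h).support)) := by
      intro e
      by_cases he : e ∈ E0S.toFinset
      · obtain ⟨u, v, hadj, huB, hvnB, rfl⟩ := Set.mem_toFinset.1 he
        rcases hpart v with hv | hv | hv
        · obtain ⟨y, hys, hyA, hyB⟩ := walk_cross hAB (P v u hadj.symm) hv.1 huB.2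
          refine ⟨y, fun _ => ⟨⟨hyA, hyB⟩, Or.inr ⟨?_, v, u, hadj.symm, Sym2.eq_swap, hys⟩⟩⟩
          intro hyr
          rcases hP4 v u hadj.symm y hys hyr with h1 | h1
          · rw [h1] at hyB; exact hv.2 hyB
          · rw [h1] at hyA; exact huB.2 hyA
        · exact absurd hv hvnB
        · exact ⟨f v, fun _ => ⟨hv, Or.inl ⟨u, v, hadj, rfl, rfl⟩⟩⟩
      · exact ⟨f (Classical.arbitrary G.V), fun h => absurd h he⟩
    choose g0 hg0 using claim0
    have hE0card : E0S.toFinset.card ≤ 3 * X.ncard :=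
      charge_lemma hreg f hf P hP5 X E0S.toFinset g0 (fun e he => hg0 e he)
    have h2 : 2 * WB.ncard ≤ G.card := by rw [hcard]; exact hWBsmall
    have hexp' := hexp WB h2
    have heb : edgeBoundaryCount G WB = E0S.ncard := rfl
    rw [heb] at hexp'
    have hle : E0S.ncard ≤ 3 * X.ncard := by
      rw [Set.ncard_eq_toFinset_card' E0S]; exact hE0card
    calc α * (WB.ncard : ℝ) ≤ (E0S.ncard : ℝ) := hexp'
      _ ≤ ((3 * X.ncard : ℕ) : ℝ) := Nat.cast_le.2 hle
      _ = 3 * (X.ncard : ℝ) := by push_cast; ring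
  -- Step 2: |B\A| ≤ |WB| + |D|
  set D : Set G'.V := {x : G'.V | x ∈ B.verts ∧ x ∉ A.verts ∧ x ∉ Set.range f} with hDdef
  have hbma : (B.verts \ A.verts).ncard ≤ WB.ncard + D.ncard := by
    have hcover : (B.verts \ A.verts) ⊆ (f '' WB) ∪ D := by
      intro x hx
      by_cases hxr : x ∈ Set.range f
      · obtain ⟨w, rfl⟩ := hxr
        exact Or.inl ⟨w, hx, rfl⟩
      · exact Or.inr ⟨hx.1, hx.2, hxr⟩
    calc (B.verts \ A.verts).ncard ≤ ((f '' WB) ∪ D).ncard :=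
          Set.ncard_le_ncard hcover (Set.toFinite _)
      _ ≤ (f '' WB).ncard + D.ncard := Set.ncard_union_le _ _
      _ = WB.ncard + D.ncard := by rw [Set.ncard_image_of_injective WB hf]
  -- Step 3: |D| ≤ m * (|Ei| + |E23|)
  set EiS : Set (Sym2 G.V) :=
    {e : Sym2 G.V | ∃ u v, G.G.Adj u v ∧ u ∈ WB ∧ v ∈ WB ∧ e = s(u, v)} with hEidef
  set E23S : Set (Sym2 G.V) :=
    {e : Sym2 G.V | ∃ u v, ∃ h : G.G.Adj u v, e = s(u, v) ∧
      (u ∈ WX ∨ v ∈ WX ∨ ∃ y ∈ (P u v h).support, y ∈ X ∧ y ∉ Set.range f)} with hE23def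
  have hD : D.ncard ≤ m * (EiS.ncard + E23S.ncard) := by
    have claimD : ∀ x : G'.V, ∃ pr : G.V × G.V, x ∈ D.toFinset →
        ∃ h : G.G.Adj pr.1 pr.2, x ∈ (P pr.1 pr.2 h).support := by
      intro x
      by_cases hx : x ∈ D.toFinset
      · have hxD : x ∈ D := Set.mem_toFinset.1 hx
        rcases hP6 x with hr | ⟨u, v, h, hs⟩
        · exact absurd hr hxD.2.2
        · exact ⟨(u, v), fun _ => ⟨h, hs⟩⟩
      · exact ⟨(Classical.arbitrary G.V, Classical.arbitrary G.V), fun h => absurd h hx⟩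
    choose pm hpm using claimD
    set gD : G'.V → Sym2 G.V := fun x => s((pm x).1, (pm x).2) with hgDdef
    set Eim : Finset (Sym2 G.V) := D.toFinset.image gD with hEimdef
    have hmemtrans : ∀ (a b a' b' : G.V) (h : G.G.Adj a b) (h' : G.G.Adj a' b') (y : G'.V),
        s(a', b') = s(a, b) → y ∈ (P a' b' h').support → y ∈ (P a b h).support := by
      intro a b a' b' h h' y heq hy
      rcases Sym2.eq_iff.1 heq with ⟨h1, h2⟩ | ⟨h1, h2⟩
      · subst h1; subst h2; exact hy
      · revert h' hy
        rw [h1, h2]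
        intro h' hy
        have hy2 : y ∈ ((P a b h).reverse).support := by
          rw [← hP3 a b h]; exact hy
        rw [SimpleGraph.Walk.support_reverse] at hy2
        exact List.mem_reverse.1 hy2
    have hDcard : D.toFinset.card ≤ m * Eim.card := by
      apply card_le_mul_of_fibers D.toFinset Eim gD m
      · exact fun x hx => Finset.mem_image_of_mem _ hx
      · intro c hc
        obtain ⟨x0, hx0, rfl⟩ := Finset.mem_image.1 hc
        obtain ⟨h0, hx0s⟩ := hpm x0 hx0
        have hsub : (D.toFinset.filter fun y => gD y = gD x0) ⊆
            ((P (pm x0).1 (pm x0).2 h0).support.toFinset.filter fun y => y ∉ Set.range f) := by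
          intro y hy
          rw [Finset.mem_filter] at hy ⊢
          obtain ⟨hyD, hyg⟩ := hy
          obtain ⟨hy0, hys⟩ := hpm y hyD
          exact ⟨List.mem_toFinset.2 (hmemtrans _ _ _ _ h0 hy0 y hyg hys),
            (Set.mem_toFinset.1 hyD).2.2⟩
        calc (D.toFinset.filter fun y => gD y = gD x0).card
            ≤ _ := Finset.card_le_card hsub
          _ ≤ m := internal_count hf h0.ne (P _ _ h0) (hP1 _ _ h0) (hP2 _ _ h0)
    have hsubcl : ∀ (u v : G.V) (h : G.G.Adj u v) (x : G'.V), x ∈ D →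
        x ∈ (P u v h).support → u ∈ WA → s(u, v) ∈ E23S := by
      intro u v h x hxD hxs hu
      obtain ⟨y, hy, hyA, hyB⟩ := walk_cross hAB ((P u v h).takeUntil x hxs) hu.1 hxD.2.1
      have hysup : y ∈ (P u v h).support := SimpleGraph.Walk.support_takeUntil_subset _ _ hy
      by_cases hyr : y ∈ Set.range f
      · rcases hP4 u v h y hysup hyr with h1 | h1
        · rw [h1] at hyB; exact absurd hyB hu.2
        · exact ⟨u, v, h, rfl, Or.inr (Or.inl (show f v ∈ X from h1 ▸ ⟨hyA, hyB⟩))⟩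
      · exact ⟨u, v, h, rfl, Or.inr (Or.inr ⟨y, hysup, ⟨hyA, hyB⟩, hyr⟩)⟩
    have hEimsub : Eim ⊆ EiS.toFinset ∪ E23S.toFinset := by
      intro c hc
      obtain ⟨x, hx, rfl⟩ := Finset.mem_image.1 hc
      obtain ⟨h0, hxs⟩ := hpm x hx
      have hxD : x ∈ D := Set.mem_toFinset.1 hx
      rcases hpart (pm x).1 with ha | ha | ha
      · exact Finset.mem_union_right _ (Set.mem_toFinset.2 (hsubcl _ _ h0 x hxD hxs ha))
      · rcases hpart (pm x).2 with hb | hb | hb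
        · have hxs' : x ∈ (P (pm x).2 (pm x).1 h0.symm).support := by
            rw [hP3 (pm x).1 (pm x).2 h0, SimpleGraph.Walk.support_reverse]
            exact List.mem_reverse.2 hxs
          have hmem : s((pm x).2, (pm x).1) ∈ E23S := hsubcl _ _ h0.symm x hxD hxs' hb
          refine Finset.mem_union_right _ (Set.mem_toFinset.2 ?_)
          show s((pm x).1, (pm x).2) ∈ E23S
          rw [Sym2.eq_swap]; exact hmem
        · exact Finset.mem_union_left _
            (Set.mem_toFinset.2 ⟨(pm x).1, (pm x).2, h0, ha, hb, rfl⟩)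
        · exact Finset.mem_union_right _
            (Set.mem_toFinset.2 ⟨(pm x).1, (pm x).2, h0, rfl, Or.inr (Or.inl hb)⟩)
      · exact Finset.mem_union_right _
          (Set.mem_toFinset.2 ⟨(pm x).1, (pm x).2, h0, rfl, Or.inl ha⟩)
    calc D.ncard = D.toFinset.card := Set.ncard_eq_toFinset_card' D
      _ ≤ m * Eim.card := hDcard
      _ ≤ m * (EiS.toFinset.card + E23S.toFinset.card) :=
          Nat.mul_le_mul_left m
            ((Finset.card_le_card hEimsub).trans (Finset.card_union_le _ _))
      _ = m * (EiS.ncard + E23S.ncard) := by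
          rw [Set.ncard_eq_toFinset_card' EiS, Set.ncard_eq_toFinset_card' E23S]
  have hEi : EiS.ncard ≤ 3 * WB.ncard := by
    have claimI : ∀ e : Sym2 G.V, ∃ w : G.V, e ∈ EiS.toFinset →
        w ∈ WB ∧ ∃ v', G.G.Adj w v' ∧ e = s(w, v') := by
      intro e
      by_cases he : e ∈ EiS.toFinset
      · obtain ⟨u, v, hadj, hu, hv, rfl⟩ := Set.mem_toFinset.1 he
        exact ⟨u, fun _ => ⟨hu, v, hadj, rfl⟩⟩
      · exact ⟨Classical.arbitrary G.V, fun h => absurd h he⟩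
    choose gi hgi using claimI
    rw [Set.ncard_eq_toFinset_card' EiS, Set.ncard_eq_toFinset_card' WB]
    apply card_le_mul_of_fibers EiS.toFinset WB.toFinset gi 3
    · exact fun e he => Set.mem_toFinset.2 (hgi e he).1
    · intro c _
      have hsub : (EiS.toFinset.filter fun e => gi e = c) ⊆
          (G.G.neighborSet c).toFinset.image (fun v' => s(c, v')) := by
        intro e he
        rw [Finset.mem_filter] at he
        obtain ⟨heE, hge⟩ := he
        obtain ⟨_, v', hadj, hev⟩ := hgi e heE
        rw [hge] at hadj hev
        exact Finset.mem_image.2 ⟨v', Set.mem_toFinset.2 hadj, hev.symm⟩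
      calc (EiS.toFinset.filter fun e => gi e = c).card
          ≤ ((G.G.neighborSet c).toFinset.image (fun v' => s(c, v'))).card :=
            Finset.card_le_card hsub
        _ ≤ (G.G.neighborSet c).toFinset.card := Finset.card_image_le
        _ = 3 := by rw [← Set.ncard_eq_toFinset_card']; exact hreg c
  have hE23 : E23S.ncard ≤ 3 * X.ncard := by
    have claim23 : ∀ e : Sym2 G.V, ∃ c : G'.V, e ∈ E23S.toFinset → c ∈ X ∧
        ((∃ u w, G.G.Adj u w ∧ c = f w ∧ e = s(u, w)) ∨
         (c ∉ Set.range f ∧ ∃ u v, ∃ h : G.G.Adj u v, e = s(u, v) ∧ c ∈ (P u v h).support)) := by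
      intro e
      by_cases he : e ∈ E23S.toFinset
      · obtain ⟨u, v, hadj, rfl, hcase⟩ := Set.mem_toFinset.1 he
        rcases hcase with hu | hv | ⟨y, hys, hyX, hyr⟩
        · exact ⟨f u, fun _ => ⟨hu, Or.inl ⟨v, u, hadj.symm, rfl, Sym2.eq_swap⟩⟩⟩
        · exact ⟨f v, fun _ => ⟨hv, Or.inl ⟨u, v, hadj, rfl, rfl⟩⟩⟩
        · exact ⟨y, fun _ => ⟨hyX, Or.inr ⟨hyr, u, v, hadj, rfl, hys⟩⟩⟩
      · exact ⟨f (Classical.arbitrary G.V), fun h => absurd h he⟩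
    choose g2 hg2 using claim23
    rw [Set.ncard_eq_toFinset_card' E23S]
    exact charge_lemma hreg f hf P hP5 X E23S.toFinset g2 (fun e he => hg2 e he)
  have hdecomp : G'.card ≤ 3 * (B.verts \ A.verts).ncard + 3 * X.ncard := by
    have huniv : (Set.univ : Set G'.V) = ((A.verts \ B.verts) ∪ (B.verts \ A.verts)) ∪ X := by
      ext x
      simp only [Set.mem_univ, true_iff, Set.mem_union, Set.mem_diff, Set.mem_inter_iff, hXdef]
      rcases hvert x with h | h
      · by_cases hb : x ∈ B.verts
        · exact Or.inr ⟨h, hb⟩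
        · exact Or.inl (Or.inl ⟨h, hb⟩)
      · by_cases ha : x ∈ A.verts
        · exact Or.inr ⟨ha, h⟩
        · exact Or.inl (Or.inr ⟨h, ha⟩)
    have hd2 : Disjoint (A.verts \ B.verts) (B.verts \ A.verts) := by
      rw [Set.disjoint_left]; rintro x ⟨hxa, hxb⟩ ⟨hxb', hxa'⟩; exact hxb hxb'
    have hd1 : Disjoint ((A.verts \ B.verts) ∪ (B.verts \ A.verts)) X := by
      rw [Set.disjoint_left]
      rintro x (⟨hxa, hxb⟩ | ⟨hxb, hxa⟩) ⟨hxA, hxB⟩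
      · exact hxb hxB
      · exact hxa hxA
    have hcard' : G'.card = (A.verts \ B.verts).ncard + (B.verts \ A.verts).ncard + X.ncard := by
      have : (Set.univ : Set G'.V).ncard = G'.card := by
        rw [Set.ncard_univ, Nat.card_eq_fintype_card]; rfl
      rw [← this, huniv, Set.ncard_union_eq hd1 (Set.toFinite _) (Set.toFinite _),
        Set.ncard_union_eq hd2 (Set.toFinite _) (Set.toFinite _)]
    omega
  -- final arithmetic
  have hs0 : (0:ℝ) ≤ (X.ncard : ℝ) := Nat.cast_nonneg _
  have hmR : (0:ℝ) ≤ (m:ℝ) := Nat.cast_nonneg _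
  have hDR : (D.ncard : ℝ) ≤ (m:ℝ) * (3 * WB.ncard + 3 * X.ncard) := by
    have h1 : (D.ncard : ℝ) ≤ (m:ℝ) * ((EiS.ncard : ℝ) + E23S.ncard) := by exact_mod_cast hD
    have h2 : (EiS.ncard : ℝ) + E23S.ncard ≤ 3 * WB.ncard + 3 * X.ncard := by
      have e1 : (EiS.ncard : ℝ) ≤ 3 * WB.ncard := by exact_mod_cast hEi
      have e2 : (E23S.ncard : ℝ) ≤ 3 * X.ncard := by exact_mod_cast hE23
      linarith
    exact h1.trans (mul_le_mul_of_nonneg_left h2 hmR)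
  have hbmaR : (((B.verts \ A.verts).ncard : ℕ) : ℝ) ≤ (WB.ncard : ℝ) + D.ncard := by
    exact_mod_cast hbma
  have hdecompR : ((G'.card : ℕ) : ℝ) ≤ 3 * ((B.verts \ A.verts).ncard : ℝ) + 3 * X.ncard := by
    exact_mod_cast hdecomp
  have hsα : (0:ℝ) ≤ α * X.ncard := mul_nonneg hα.le hs0
  have F1 := mul_le_mul_of_nonneg_left hbmaR hα.le
  have F2 := mul_le_mul_of_nonneg_left hdecompR hα.le
  have F3 := mul_le_mul_of_nonneg_left hDR hα.le
  have F4 := mul_le_mul_of_nonneg_left hexpWB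
    (show (0:ℝ) ≤ 3 * (1 + 3*(m:ℝ)) by positivity)
  have hkey : α * (G'.card : ℝ) ≤ (X.ncard : ℝ) * (18 + 6*α + 27*m + 9*α*m) := by
    nlinarith [F1, F2, F3, F4, hsα, hs0]
  have hden : (0:ℝ) < 3 * (1 + 3*(m:ℝ)/2) * (6/α + 2) := by
    have h1 : (0:ℝ) < 1 + 3*(m:ℝ)/2 := by positivity
    have h2 : (0:ℝ) < 6/α := div_pos (by norm_num) hα
    nlinarith
  rw [div_le_iff₀ hden]
  have heq : α * ((X.ncard:ℝ) * (3*(1+3*(m:ℝ)/2)*(6/α+2)))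
      = (X.ncard:ℝ) * (18 + 6*α + 27*m + 9*α*m) := by
    field_simp; ring
  have hfin : α * (G'.card:ℝ) ≤ α * ((X.ncard:ℝ) * (3*(1+3*(m:ℝ)/2)*(6/α+2))) := by
    rw [heq]; exact hkey
  exact le_of_mul_le_mul_left hfin hα

/-- **Lemma 28.** If `G'` is obtained from a `3`-regular `α`-expander on `n` vertices by
subdividing each edge at most `m` times, then every balanced separation of `G'` has size
at least `n' / (3(1+3m/2)(6/α+2))`, where `n' = |V(G')|`. -/
theorem stmt17 (α : ℝ) (n m : ℕ) (hα : 0 < α) (hn : 1 ≤ n) (hm : 1 ≤ m)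
    (G G' : FGraph) (hcard : G.card = n)
    (hreg : ∀ v : G.V, (G.G.neighborSet v).ncard = 3)
    (hexp : IsExpander G α)
    (hsub : IsSubdivAtMost m G' G) :
    ∀ A B : G'.G.Subgraph, A ⊔ B = ⊤ → Disjoint A.edgeSet B.edgeSet →
      3 * (A.verts \ B.verts).ncard ≤ 2 * G'.card →
      3 * (B.verts \ A.verts).ncard ≤ 2 * G'.card →
      (G'.card : ℝ) / (3 * (1 + 3 * (m : ℝ) / 2) * (6 / α + 2))
        ≤ ((A.verts ∩ B.verts).ncard : ℝ) := by
  intro A B hAB hdisj hbalA hbalB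
  obtain ⟨f, hf, P, hP1, hP2, hP3, hP4, hP5, hP6, hP7⟩ := hsub
  have hsum : {w : G.V | f w ∈ A.verts \ B.verts}.ncard
      + {w : G.V | f w ∈ B.verts \ A.verts}.ncard ≤ n := by
    have hdisjW : Disjoint {w : G.V | f w ∈ A.verts \ B.verts}
        {w : G.V | f w ∈ B.verts \ A.verts} := by
      rw [Set.disjoint_left]; rintro w ⟨ha, hb⟩ ⟨hb', ha'⟩; exact hb hb'
    calc {w : G.V | f w ∈ A.verts \ B.verts}.ncard
          + {w : G.V | f w ∈ B.verts \ A.verts}.ncard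
        = ({w : G.V | f w ∈ A.verts \ B.verts}
            ∪ {w : G.V | f w ∈ B.verts \ A.verts}).ncard :=
          (Set.ncard_union_eq hdisjW (Set.toFinite _) (Set.toFinite _)).symm
      _ ≤ (Set.univ : Set G.V).ncard :=
          Set.ncard_le_ncard (Set.subset_univ _) (Set.toFinite _)
      _ = n := by
          rw [Set.ncard_univ, Nat.card_eq_fintype_card]
          exact hcard
  by_cases hc : {w : G.V | f w ∈ B.verts \ A.verts}.ncard
      ≤ {w : G.V | f w ∈ A.verts \ B.verts}.ncard
  · exact aux28 α n m hα hn G G' hcard hreg hexp f hf P hP1 hP2 hP3 hP4 hP5 hP6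
      A B hAB hbalA (by omega)
  · have h := aux28 α n m hα hn G G' hcard hreg hexp f hf P hP1 hP2 hP3 hP4 hP5 hP6
      B A (by rw [sup_comm]; exact hAB) hbalB (by omega)
    rwa [Set.inter_comm] at h
end
end
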